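/- arXiv:2208.02980 — 9 statements merged into one kernel-verified Lean document; each statement's English description precedes it below -/
import Mathlib

section
/- Let k be a kernel on X and φ(z) = ∑_n a_n z^n with all a_n > 0 and ∑_n a_n k(x,x)^n < ∞ for all x. If X is finitely separated by H_k (i.e., for every finite set of distinct points x_1,…,x_n in X there exists ψ ∈ H_k with ψ(x_i) ≠ ψ(x_j) for i ≠ j), then the kernel φ∘k : (x,y) ↦ ∑_n a_n k(x,y)^n is strictly positive definite. -/
open scoped ComplexOrder ComplexConjugate InnerProductSpace

/-- `k` is a kernel function on `X`: self-adjoint and positive semi-definite. -/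
def IsKernel {X : Type*} (k : X → X → ℂ) : Prop :=
  (∀ x y, k y x = conj (k x y)) ∧
  ∀ (n : ℕ) (x : Fin n → X) (c : Fin n → ℂ),
    0 ≤ ∑ i, ∑ j, c i * conj (c j) * k (x i) (x j)

/-- `k` is strictly positive definite on `X`. -/
def IsStrictPosKernel {X : Type*} (k : X → X → ℂ) : Prop :=
  ∀ (n : ℕ) (x : Fin n → X), Function.Injective x →
    ∀ c : Fin n → ℂ, c ≠ 0 →
      0 < ∑ i, ∑ j, c i * conj (c j) * k (x i) (x j)

/-!
Write `k x y = ⟪Φ y, Φ x⟫` and let `Qₘ(c) = ∑ cᵢ c̄ⱼ ⟪Φ xⱼ, Φ xᵢ⟫ᵐ` be the quadratic form of `kᵐ`.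
It is the form of the `m`-th Hadamard power of a Gram matrix, hence nonnegative by the Schur
product theorem, and the form of `φ ∘ k` is `∑ aₘ Qₘ(c)`; so it suffices that some `Qₘ(c) ≠ 0`.
Adjoin the separating vector `v` to the points: the Hadamard power of the Gram matrix of
`(v, Φ x₁, …, Φ xₙ)` is still positive semidefinite, so `Qₘ(c) = 0` puts `(0, c)` in its kernel,
and the row of `v` gives `∑ cᵢ ⟪v, Φ xᵢ⟫ᵐ = 0`. If this held for every `m`, the Vandermonde
matrix of the distinct numbers `⟪v, Φ xᵢ⟫` would force `c = 0`.
-/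

section

open Matrix

theorem Matrix.PosSemidef.map_pow {ι 𝕜 : Type*} [Finite ι] [RCLike 𝕜] {A : Matrix ι ι 𝕜}
    (hA : A.PosSemidef) (m : ℕ) : (A.map (· ^ m)).PosSemidef := by
  induction m with
  | zero =>
    convert posSemidef_gram 𝕜 (fun _ : ι => (1 : 𝕜)) using 1
    ext; simp
  | succ m ih =>
    convert ih.hadamard hA using 1
    ext; simp [pow_succ]

theorem sum_sum_mul_conj_mul_eq_star_dotProduct_mulVec {ι : Type*} [Fintype ι]
    (A : Matrix ι ι ℂ) (c : ι → ℂ) :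
    ∑ i, ∑ j, c i * conj (c j) * A j i = star c ⬝ᵥ A *ᵥ c := by
  rw [Finset.sum_comm]
  simp only [dotProduct, mulVec, Finset.mul_sum, Pi.star_apply, RCLike.star_def]
  refine Finset.sum_congr rfl fun j _ => Finset.sum_congr rfl fun i _ => by ring

variable {H : Type*} [SeminormedAddCommGroup H] [InnerProductSpace ℂ H]

theorem sum_sum_mul_conj_mul_inner_pow_nonneg {ι : Type*} [Fintype ι] (Φ : ι → H) (c : ι → ℂ)
    (m : ℕ) : 0 ≤ ∑ i, ∑ j, c i * conj (c j) * ⟪Φ j, Φ i⟫_ℂ ^ m := by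
  have := ((posSemidef_gram ℂ Φ).map_pow m).dotProduct_mulVec_nonneg c
  rwa [← sum_sum_mul_conj_mul_eq_star_dotProduct_mulVec] at this

theorem sum_mul_inner_pow_eq_zero_of_sum_sum_eq_zero {ι : Type*} [Fintype ι] (Φ : ι → H)
    (v : H) (c : ι → ℂ) (m : ℕ)
    (h : ∑ i, ∑ j, c i * conj (c j) * ⟪Φ j, Φ i⟫_ℂ ^ m = 0) :
    ∑ i, c i * ⟪v, Φ i⟫_ℂ ^ m = 0 := by
  set y : Option ι → H := fun o => o.elim v Φ
  set w : Option ι → ℂ := fun o => o.elim 0 c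
  have hG := (posSemidef_gram ℂ y).map_pow m
  have hform : star w ⬝ᵥ (gram ℂ y).map (· ^ m) *ᵥ w = 0 := by
    rw [← sum_sum_mul_conj_mul_eq_star_dotProduct_mulVec, ← h]
    simp [Fintype.sum_option, w, y]
  have := congrFun ((hG.dotProduct_mulVec_zero_iff w).1 hform) none
  simpa [mulVec, dotProduct, Fintype.sum_option, y, w, mul_comm] using this

theorem exists_sum_sum_mul_conj_mul_inner_pow_ne_zero {n : ℕ} (Φ : Fin n → H) (v : H)
    (hv : Function.Injective fun i => ⟪v, Φ i⟫_ℂ) {c : Fin n → ℂ} (hc : c ≠ 0) :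
    ∃ m, ∑ i, ∑ j, c i * conj (c j) * ⟪Φ j, Φ i⟫_ℂ ^ m ≠ 0 := by
  by_contra! h
  exact hc <| Matrix.eq_zero_of_forall_pow_sum_mul_pow_eq_zero hv fun m =>
    sum_mul_inner_pow_eq_zero_of_sum_sum_eq_zero Φ v c m (h m)

theorem norm_inner_le_max_norm_sq (u w : H) : ‖⟪u, w⟫_ℂ‖ ≤ max (‖u‖ ^ 2) (‖w‖ ^ 2) := by
  refine (norm_inner_le_norm u w).trans ?_
  rcases le_total ‖u‖ ‖w‖ with h | h
  · exact le_max_of_le_right (by nlinarith [norm_nonneg u])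
  · exact le_max_of_le_left (by nlinarith [norm_nonneg w])

theorem summable_mul_pow_of_norm_le_max {a : ℕ → ℝ} (ha : ∀ m, 0 ≤ a m) {r s : ℝ}
    (har : Summable fun m => a m * r ^ m) (has : Summable fun m => a m * s ^ m)
    {z : ℂ} (hz : ‖z‖ ≤ max r s) : Summable fun m => (a m : ℂ) * z ^ m := by
  have hmax : Summable fun m => a m * max r s ^ m := by
    rcases max_choice r s with h | h <;> rwa [h]
  refine .of_norm_bounded hmax fun m => ?_
  rw [norm_mul, norm_pow, Complex.norm_real, Real.norm_of_nonneg (ha m)]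
  exact mul_le_mul_of_nonneg_left (pow_le_pow_left₀ (norm_nonneg z) hz m) (ha m)

theorem isStrictPosKernel_tsum_mul_inner_pow {X : Type*} (Φ : X → H) {a : ℕ → ℝ}
    (ha : ∀ m, 0 < a m) (hsum : ∀ x, Summable fun m => a m * (‖Φ x‖ ^ 2) ^ m)
    (hsep : ∀ (n : ℕ) (x : Fin n → X), Function.Injective x →
      ∃ v : H, ∀ i j, i ≠ j → ⟪v, Φ (x i)⟫_ℂ ≠ ⟪v, Φ (x j)⟫_ℂ) :
    IsStrictPosKernel fun x y => ∑' m, (a m : ℂ) * ⟪Φ y, Φ x⟫_ℂ ^ m := by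
  intro n x hx c hc
  obtain ⟨v, hv⟩ := hsep n x hx
  set Q : ℕ → ℂ := fun m => ∑ i, ∑ j, c i * conj (c j) * ⟪Φ (x j), Φ (x i)⟫_ℂ ^ m
  have hQ : HasSum (fun m => (a m : ℂ) * Q m)
      (∑ i, ∑ j, c i * conj (c j) * ∑' m, (a m : ℂ) * ⟪Φ (x j), Φ (x i)⟫_ℂ ^ m) := by
    have hterm (i j : Fin n) :=
      ((summable_mul_pow_of_norm_le_max (fun m => (ha m).le) (hsum (x j)) (hsum (x i))
        (norm_inner_le_max_norm_sq _ _)).hasSum.mul_left (c i * conj (c j)))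
    have hsummand : (fun m => (a m : ℂ) * Q m) = fun m =>
        ∑ i, ∑ j, c i * conj (c j) * ((a m : ℂ) * ⟪Φ (x j), Φ (x i)⟫_ℂ ^ m) := by
      funext m
      simp only [Q, Finset.mul_sum]
      exact Finset.sum_congr rfl fun i _ => Finset.sum_congr rfl fun j _ => by ring
    rw [hsummand]
    exact hasSum_sum fun i _ => hasSum_sum fun j _ => hterm i j
  obtain ⟨m₀, hm₀⟩ := exists_sum_sum_mul_conj_mul_inner_pow_ne_zero (Φ ∘ x) v
    (fun i j hij => by_contra fun hne => hv i j hne hij) hc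
  have hQ_nonneg (m : ℕ) : 0 ≤ Q m := sum_sum_mul_conj_mul_inner_pow_nonneg (Φ ∘ x) c m
  have ha' (m : ℕ) : (0 : ℂ) < a m := by exact_mod_cast ha m
  exact hasSum_lt (f := 0) (i := m₀) (fun m => mul_nonneg (ha' m).le (hQ_nonneg m))
    (mul_pos (ha' m₀) ((hQ_nonneg m₀).lt_of_ne' hm₀)) hasSum_zero hQ

end

theorem tsum_pow_isStrictPosKernel_of_finitelySeparated_general
    {X : Type*} (k : X → X → ℂ)
    (a : ℕ → ℝ) (ha : ∀ n, 0 < a n)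
    (hsum : ∀ x : X, Summable (fun n => a n * (k x x).re ^ n))
    (H : Type*) [NormedAddCommGroup H] [InnerProductSpace ℂ H]
    (Φ : X → H) (hΦ : ∀ x y, k x y = ⟪Φ y, Φ x⟫_ℂ)
    (hsep : ∀ (n : ℕ) (x : Fin n → X), Function.Injective x →
      ∃ v : H, ∀ i j, i ≠ j → ⟪v, Φ (x i)⟫_ℂ ≠ ⟪v, Φ (x j)⟫_ℂ) :
    IsStrictPosKernel (fun x y => ∑' n, (a n : ℂ) * k x y ^ n) := by
  obtain rfl : k = fun x y => ⟪Φ y, Φ x⟫_ℂ := funext₂ hΦ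
  refine isStrictPosKernel_tsum_mul_inner_pow Φ ha (fun x => ?_) hsep
  simpa only [← inner_self_eq_norm_sq (𝕜 := ℂ), RCLike.re_to_complex] using hsum x

/-- Let `k` be a kernel on `X` with `φ(z) = ∑ aₙ zⁿ`, all `aₙ > 0`, and
`∑ aₙ k(x,x)ⁿ < ∞` for all `x`.  The RKHS `H_k` is realized as the functions
`x ↦ ⟪v, Φ x⟫` associated to a feature map `Φ : X → H` with `k x y = ⟪Φ y, Φ x⟫`.
If `X` is finitely separated by `H_k`, then `φ ∘ k : (x,y) ↦ ∑ aₙ k(x,y)ⁿ` is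
strictly positive definite. -/
theorem tsum_pow_isStrictPosKernel_of_finitelySeparated
    {X : Type*} (k : X → X → ℂ) (hk : IsKernel k)
    (a : ℕ → ℝ) (ha : ∀ n, 0 < a n)
    (hsum : ∀ x : X, Summable (fun n => a n * (k x x).re ^ n))
    (H : Type*) [NormedAddCommGroup H] [InnerProductSpace ℂ H] [CompleteSpace H]
    (Φ : X → H) (hΦ : ∀ x y, k x y = ⟪Φ y, Φ x⟫_ℂ)
    (hsep : ∀ (n : ℕ) (x : Fin n → X), Function.Injective x →
      ∃ v : H, ∀ i j, i ≠ j → ⟪v, Φ (x i)⟫_ℂ ≠ ⟪v, Φ (x j)⟫_ℂ) :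
    IsStrictPosKernel (fun x y => ∑' n, (a n : ℂ) * k x y ^ n) :=
  tsum_pow_isStrictPosKernel_of_finitelySeparated_general k a ha hsum H Φ hΦ hsep
end

section
/- Let k be a kernel on X with RKHS H_k, and suppose exp(t·k(x,y)) is strictly positive definite on X × X for some t > 0. Then the kernel (x,y) ↦ exp(−t ‖k_x − k_y‖²_{H_k}) is strictly positive definite on X × X, where k_x denotes the reproducing kernel function at x. -/
/-!
Since `exp z * conj (exp z) = exp (2 re z)`, the kernel factors as
`f x * conj (f y) * (E x y * conj (E x y))` with `E = exp (t k)` and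
`f x = exp (-t re k(x,x)) ≠ 0`.
Entrywise conjugation preserves strict positive definiteness, so by the Schur product theorem
`E * conj E` is strictly positive definite, and rescaling by the nowhere vanishing `f` keeps it so.
-/

open scoped ComplexOrder ComplexConjugate

namespace Matrix
variable {n : Type*} [Fintype n] [DecidableEq n]

theorem isHermitian_of_forall_im_star_dotProduct_mulVec_self {A : Matrix n n ℂ}
    (h : ∀ x, (star x ⬝ᵥ A *ᵥ x).im = 0) : A.IsHermitian := by
  refine isSymmetric_toEuclideanLin_iff.mp <| (LinearMap.isSymmetric_iff_inner_map_self_real _).mpr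
    fun v => Complex.conj_eq_iff_im.mpr ?_
  change (v.ofLp ⬝ᵥ star (A *ᵥ v.ofLp)).im = 0
  rw [dotProduct_star, dotProduct_comm, Complex.star_def, Complex.conj_im, h, neg_zero]

theorem posDef_iff_forall_star_dotProduct_mulVec_pos {A : Matrix n n ℂ} :
    A.PosDef ↔ ∀ x, x ≠ 0 → 0 < star x ⬝ᵥ A *ᵥ x := by
  refine ⟨fun hA _ hx => hA.dotProduct_mulVec_pos hx, fun h => .of_dotProduct_mulVec_pos ?_ h⟩
  refine isHermitian_of_forall_im_star_dotProduct_mulVec_self fun x => ?_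
  rcases eq_or_ne x 0 with rfl | hx
  · simp
  · exact (Complex.pos_iff.mp (h x hx)).2.symm

end Matrix

section Kernel
open Matrix
variable {X : Type*}

def kernelMatrix (k : X → X → ℂ) {n : ℕ} (x : Fin n → X) : Matrix (Fin n) (Fin n) ℂ :=
  Matrix.of fun i j => k (x i) (x j)

theorem sum_sum_mul_conj_mul_eq_dotProduct_kernelMatrix_mulVec (k : X → X → ℂ) {n : ℕ}
    (x : Fin n → X) (c : Fin n → ℂ) :
    ∑ i, ∑ j, c i * conj (c j) * k (x i) (x j) = c ⬝ᵥ kernelMatrix k x *ᵥ star c := by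
  simp only [dotProduct, mulVec, kernelMatrix, of_apply, Finset.mul_sum, Pi.star_apply,
    Complex.star_def]
  exact Finset.sum_congr rfl fun i _ => Finset.sum_congr rfl fun j _ => by ring

theorem isStrictPosKernel_iff_posDef {k : X → X → ℂ} :
    IsStrictPosKernel k ↔
      ∀ (n : ℕ) (x : Fin n → X), Function.Injective x → (kernelMatrix k x).PosDef := by
  simp only [IsStrictPosKernel, posDef_iff_forall_star_dotProduct_mulVec_pos,
    sum_sum_mul_conj_mul_eq_dotProduct_kernelMatrix_mulVec]
  refine forall₂_congr fun n x => imp_congr_right fun _ => ?_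
  rw [star_involutive.surjective.forall]
  simp only [star_star, ne_eq, star_eq_zero]

namespace IsStrictPosKernel
variable {k k' : X → X → ℂ}

theorem mul (hk : IsStrictPosKernel k) (hk' : IsStrictPosKernel k') :
    IsStrictPosKernel fun x y => k x y * k' x y :=
  isStrictPosKernel_iff_posDef.mpr fun n x hx =>
    (isStrictPosKernel_iff_posDef.mp hk n x hx).hadamard
      (isStrictPosKernel_iff_posDef.mp hk' n x hx)

theorem star (hk : IsStrictPosKernel k) : IsStrictPosKernel fun x y => conj (k x y) := by
  refine isStrictPosKernel_iff_posDef.mpr fun n x hx => ?_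
  have hK := isStrictPosKernel_iff_posDef.mp hk n x hx
  have hT : kernelMatrix (fun x y => conj (k x y)) x = (kernelMatrix k x)ᵀ := by
    ext i j
    exact hK.isHermitian.apply j i
  exact hT ▸ hK.transpose

theorem mul_conj_mul (hk : IsStrictPosKernel k) {f : X → ℂ} (hf : ∀ x, f x ≠ 0) :
    IsStrictPosKernel fun x y => f x * conj (f y) * k x y := by
  intro n x hx c hc
  have hcf : (fun i => c i * f (x i)) ≠ 0 := fun h =>
    hc <| funext fun i => (mul_eq_zero.mp (congrFun h i)).resolve_right (hf (x i))
  convert hk n x hx _ hcf using 3 with i _ j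
  simp only [map_mul]
  ring

end IsStrictPosKernel
end Kernel

theorem Complex.exp_mul_conj_exp (z : ℂ) : exp z * conj (exp z) = Real.exp (2 * z.re) := by
  rw [← exp_conj, ← exp_add, add_conj, ofReal_exp, ofReal_mul, ofReal_ofNat]

theorem exp_neg_dist_sq_isStrictPosKernel_general {X : Type*} (k : X → X → ℂ)
    (t : ℝ)
    (hexp : IsStrictPosKernel (fun x y => Complex.exp ((t : ℂ) * k x y))) :
    IsStrictPosKernel (fun x y =>
      (Real.exp (-t * ((k x x).re - 2 * (k x y).re + (k y y).re)) : ℂ)) := by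
  have hfactor :
      (fun x y => (Real.exp (-t * ((k x x).re - 2 * (k x y).re + (k y y).re)) : ℂ)) =
      fun x y => (Real.exp (-t * (k x x).re) : ℂ) * conj (Real.exp (-t * (k y y).re) : ℂ) *
        (Complex.exp (t * k x y) * conj (Complex.exp (t * k x y))) := by
    funext x y
    rw [Complex.exp_mul_conj_exp, Complex.conj_ofReal, ← Complex.ofReal_mul,
      ← Complex.ofReal_mul, ← Real.exp_add, ← Real.exp_add, Complex.re_ofReal_mul]
    congr 2
    ring
  rw [hfactor]
  exact (hexp.mul hexp.star).mul_conj_mul fun x =>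
    Complex.ofReal_ne_zero.mpr (Real.exp_pos _).ne'

/-- If `exp (t k)` is strictly positive definite for some `t > 0`, then so is
`(x,y) ↦ exp (−t ‖k_x − k_y‖²_{H_k})`, where
`‖k_x − k_y‖²_{H_k} = k(x,x) − 2 Re k(x,y) + k(y,y)`. -/
theorem exp_neg_dist_sq_isStrictPosKernel {X : Type*} (k : X → X → ℂ) (hk : IsKernel k)
    (t : ℝ) (ht : 0 < t)
    (hexp : IsStrictPosKernel (fun x y => Complex.exp ((t : ℂ) * k x y))) :
    IsStrictPosKernel (fun x y =>
      (Real.exp (-t * ((k x x).re - 2 * (k x y).re + (k y y).re)) : ℂ)) :=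
  exp_neg_dist_sq_isStrictPosKernel_general k t hexp
end

section
/- Let Φ be a map from a set X into a complex Hilbert space H. If Φ is injective, then for every t > 0 the kernel (x,y) ↦ exp(t ⟨Φ(y), Φ(x)⟩_H) is strictly positive definite on X × X. -/
open scoped ComplexOrder ComplexConjugate InnerProductSpace

/-!
Since `⟪y, x⟫ ^ k = ⟪y ^ ⊗k, x ^ ⊗k⟫`, expanding the exponential writes the quadratic form
`∑ i j, c i * conj (c j) * exp (t * ⟪v j, v i⟫)` as `∑ k, t ^ k / k! * ‖∑ i, c i • v i ^ ⊗k‖ ^ 2`,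
a series of nonnegative terms. If all of them vanished, pairing with `u ^ ⊗k` for a vector `u`
separating the points `v i` would give `∑ i, c i * ⟪u, v i⟫ ^ k = 0` for every `k`, and the
Vandermonde determinant would force `c = 0`. Tensor powers are taken in coordinates, after moving
the finitely many points isometrically into a Euclidean space.
-/

open Finset Nat

theorem IsStrictPosKernel.comp {X Y : Type*} {k : Y → Y → ℂ} (hk : IsStrictPosKernel k)
    {f : X → Y} (hf : Function.Injective f) : IsStrictPosKernel fun x y => k (f x) (f y) :=
  fun n x hx c hc => hk n (f ∘ x) (hf.comp hx) c hc

section RCLike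

variable {𝕜 E ι : Type*} [RCLike 𝕜] [NormedAddCommGroup E] [InnerProductSpace 𝕜 E]

theorem sum_sum_mul_conj_mul_inner_eq_norm_sq [Fintype ι] (v : ι → E) (c : ι → 𝕜) :
    ∑ i, ∑ j, c i * conj (c j) * ⟪v j, v i⟫_𝕜 = (‖∑ i, c i • v i‖ : 𝕜) ^ 2 := by
  rw [← inner_self_eq_norm_sq_to_K, sum_inner, sum_comm]
  simp only [inner_sum, inner_smul_left, inner_smul_right]
  exact sum_congr rfl fun i _ => sum_congr rfl fun j _ => by ring

-- A vector space over an infinite field is not a finite union of the hyperplanes `(x i - x j)ᗮ`.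
theorem exists_inner_injective [Finite ι] {x : ι → E} (hx : Function.Injective x) :
    ∃ u : E, Function.Injective fun i => ⟪u, x i⟫_𝕜 := by
  by_contra! h
  have hcover : ⋃ p : {p : ι × ι // p.1 ≠ p.2}, ((𝕜 ∙ (x p.1.1 - x p.1.2))ᗮ : Set E) =
      Set.univ := by
    refine Set.eq_univ_of_forall fun u => ?_
    obtain ⟨i, j, hij, hne⟩ := Function.not_injective_iff.mp (h u)
    refine Set.mem_iUnion.mpr ⟨⟨(i, j), hne⟩, ?_⟩
    rw [SetLike.mem_coe, Submodule.mem_orthogonal_singleton_iff_inner_left, inner_sub_right,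
      sub_eq_zero]
    exact hij
  obtain ⟨⟨⟨i, j⟩, hne⟩, htop⟩ := Subspace.exists_eq_top_of_iUnion_eq_univ hcover
  have hself : x i - x j ∈ (𝕜 ∙ (x i - x j))ᗮ := htop ▸ Submodule.mem_top
  rw [Submodule.mem_orthogonal_singleton_iff_inner_left, inner_self_eq_zero, sub_eq_zero] at hself
  exact hne (hx hself)

/-- Coordinates of the `k`-fold tensor power `x ⊗ ⋯ ⊗ x` in the product basis. -/
def EuclideanSpace.tensorPower (k : ℕ) (x : EuclideanSpace 𝕜 ι) : EuclideanSpace 𝕜 (Fin k → ι) :=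
  WithLp.toLp 2 fun g => ∏ a, x (g a)

theorem EuclideanSpace.inner_tensorPower [Fintype ι] (k : ℕ) (x y : EuclideanSpace 𝕜 ι) :
    ⟪tensorPower k x, tensorPower k y⟫_𝕜 = ⟪x, y⟫_𝕜 ^ k := by
  simp only [tensorPower, PiLp.inner_apply, RCLike.inner_apply, sum_pow', Fintype.piFinset_univ,
    map_prod, prod_mul_distrib]

theorem EuclideanSpace.exists_sum_smul_tensorPower_ne_zero [Fintype ι] {n : ℕ}
    {x : Fin n → EuclideanSpace 𝕜 ι} (hx : Function.Injective x) {c : Fin n → 𝕜} (hc : c ≠ 0) :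
    ∃ k, ∑ i, c i • tensorPower k (x i) ≠ 0 := by
  obtain ⟨u, hu⟩ := exists_inner_injective (𝕜 := 𝕜) hx
  by_contra! h
  refine hc (Matrix.eq_zero_of_forall_pow_sum_mul_pow_eq_zero hu fun k => ?_)
  calc ∑ i, c i * ⟪u, x i⟫_𝕜 ^ (k : ℕ)
      = ⟪tensorPower k u, ∑ i, c i • tensorPower k (x i)⟫_𝕜 := by
        simp only [inner_sum, inner_smul_right, inner_tensorPower]
    _ = 0 := by rw [h, inner_zero_right]

end RCLike

theorem hasSum_sum_sum_mul_conj_mul_exp {ι : Type*} [Fintype ι] (c : ι → ℂ) (z : ι → ι → ℂ) :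
    HasSum (fun k : ℕ => ∑ i, ∑ j, c i * conj (c j) * (z i j ^ k / k !))
      (∑ i, ∑ j, c i * conj (c j) * Complex.exp (z i j)) :=
  hasSum_sum fun i _ => hasSum_sum fun j _ => by
    rw [Complex.exp_eq_exp_ℂ]
    exact (NormedSpace.expSeries_div_hasSum_exp (z i j)).mul_left _

theorem Complex.pos_of_hasSum_ofReal {α : Type*} {a : α → ℝ} {s : ℂ}
    (h : HasSum (fun k => (a k : ℂ)) s) (ha : 0 ≤ a) {k : α} (hk : 0 < a k) : 0 < s := by
  obtain ⟨r, hr⟩ := Complex.summable_ofReal.mp h.summable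
  rw [h.unique (Complex.hasSum_ofReal.mpr hr)]
  exact Complex.zero_lt_real.mpr (hasSum_lt ha hk hasSum_zero hr)

open EuclideanSpace in
theorem isStrictPosKernel_exp_inner_euclidean {ι : Type*} [Fintype ι] {t : ℝ} (ht : 0 < t) :
    IsStrictPosKernel fun x y : EuclideanSpace ℂ ι => Complex.exp (t * ⟪y, x⟫_ℂ) := by
  intro n x hx c hc
  have hterm : ∀ k : ℕ, ∑ i, ∑ j, c i * conj (c j) * ((t * ⟪x j, x i⟫_ℂ) ^ k / k !) =
      ((t ^ k / k ! * ‖∑ i, c i • tensorPower k (x i)‖ ^ 2 : ℝ) : ℂ) := by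
    intro k
    calc _ = (t : ℂ) ^ k / k ! *
          ∑ i, ∑ j, c i * conj (c j) * ⟪tensorPower k (x j), tensorPower k (x i)⟫_ℂ := by
          simp only [inner_tensorPower, mul_sum]
          exact sum_congr rfl fun i _ => sum_congr rfl fun j _ => by ring
      _ = _ := by
          rw [sum_sum_mul_conj_mul_inner_eq_norm_sq]
          push_cast
          rfl
  have hsum := hasSum_sum_sum_mul_conj_mul_exp c fun i j => t * ⟪x j, x i⟫_ℂ
  simp only [hterm] at hsum
  obtain ⟨k, hk⟩ := exists_sum_smul_tensorPower_ne_zero hx hc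
  exact Complex.pos_of_hasSum_ofReal hsum (fun k => by positivity) (k := k) (by positivity)

theorem isStrictPosKernel_exp_inner {E : Type*} [NormedAddCommGroup E] [InnerProductSpace ℂ E]
    {t : ℝ} (ht : 0 < t) : IsStrictPosKernel fun x y : E => Complex.exp (t * ⟪y, x⟫_ℂ) := by
  intro n x hx c hc
  let U := Submodule.span ℂ (Set.range x)
  have : FiniteDimensional ℂ U := FiniteDimensional.span_of_finite ℂ (Set.finite_range x)
  let e := (stdOrthonormalBasis ℂ U).repr
  let y (i : Fin n) : U := ⟨x i, Submodule.subset_span (Set.mem_range_self i)⟩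
  have hy : Function.Injective (e ∘ y) :=
    e.injective.comp fun i j h => hx (congrArg Subtype.val h)
  simpa [e.inner_map_map] using isStrictPosKernel_exp_inner_euclidean ht n (e ∘ y) hy c hc

theorem exp_inner_isStrictPosKernel_general {X : Type*}
    {H : Type*} [NormedAddCommGroup H] [InnerProductSpace ℂ H]
    (Φ : X → H) (hΦ : Function.Injective Φ) (t : ℝ) (ht : 0 < t) :
    IsStrictPosKernel (fun x y => Complex.exp ((t : ℂ) * ⟪Φ y, Φ x⟫_ℂ)) :=
  (isStrictPosKernel_exp_inner ht).comp hΦ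

/-- If `Φ : X → H` is an injective map into a complex Hilbert space, then for every `t > 0`
the kernel `(x,y) ↦ exp (t ⟪Φ y, Φ x⟫)` is strictly positive definite. -/
theorem exp_inner_isStrictPosKernel {X : Type*}
    {H : Type*} [NormedAddCommGroup H] [InnerProductSpace ℂ H] [CompleteSpace H]
    (Φ : X → H) (hΦ : Function.Injective Φ) (t : ℝ) (ht : 0 < t) :
    IsStrictPosKernel (fun x y => Complex.exp ((t : ℂ) * ⟪Φ y, Φ x⟫_ℂ)) :=
  exp_inner_isStrictPosKernel_general Φ hΦ t ht
end

section
/- For any Hilbert space H and any t > 0, the Gaussian kernel (x,y) ↦ exp(−t ‖x − y‖²_H) is strictly positive definite on H × H: for any n distinct vectors x_1,…,x_n ∈ H and any nonzero (c_1,…,c_n) ∈ ℂ^n, ∑_{i,j} c_i conj(c_j) exp(−t‖x_i − x_j‖²) > 0. -/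
/-!
Expanding `‖xᵢ - xⱼ‖² = ‖xᵢ‖² - 2⟪xᵢ, xⱼ⟫ + ‖xⱼ‖²`, the Gaussian kernel matrix is congruent, via a
positive diagonal matrix, to the entrywise exponential `exp ∘ G` of the Gram matrix `G` of the
points `√(2t) xᵢ`, so it suffices that `exp ∘ G` is positive definite.

By the Schur product theorem, entrywise power series with nonnegative coefficients preserve
positive semidefiniteness; hence `exp ∘ A = exp ∘ B + (exp ∘ B) ⊙ (exp ∘ (A - B) - 1)` shows that
`exp ∘ A` is positive definite as soon as `exp ∘ B` is and `A - B` is positive semidefinite.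
Choose `v` with `‖v‖ ≤ 1` such that the numbers `λᵢ = ⟪xᵢ, v⟫` are distinct. Cauchy–Schwarz gives
`G - λλᵀ ⪰ 0`, and `exp ∘ (λλᵀ) = ∑ₖ (λᵏ)(λᵏ)ᵀ / k!` is positive definite because its first `n`
terms add up to `V D Vᵀ` with `V` the invertible Vandermonde matrix of the `λᵢ`.
-/

open scoped ComplexOrder ComplexConjugate

open Finset Matrix
open scoped Nat InnerProductSpace

namespace Matrix

variable {ι : Type*}

theorem hasSum_map_exp_sub_one (M : Matrix ι ι ℝ) :
    HasSum (fun k => ((k + 1)! : ℝ)⁻¹ • M.map (· ^ (k + 1))) (M.map fun a => Real.exp a - 1) := by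
  refine Pi.hasSum.2 fun i => Pi.hasSum.2 fun j => ?_
  simpa [Real.exp_eq_exp_ℝ, div_eq_inv_mul] using
    (hasSum_nat_add_iff' 1).2 (NormedSpace.expSeries_div_hasSum_exp (M i j))

theorem hasSum_map_exp_vecMulVec (v : ι → ℝ) :
    HasSum (fun k => (k ! : ℝ)⁻¹ • vecMulVec (v ^ k) (v ^ k)) ((vecMulVec v v).map Real.exp) := by
  refine Pi.hasSum.2 fun i => Pi.hasSum.2 fun j => ?_
  simpa [Real.exp_eq_exp_ℝ, div_eq_inv_mul, vecMulVec, mul_pow] using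
    NormedSpace.expSeries_div_hasSum_exp (v i * v j)

variable [Fintype ι]

theorem hasSum_dotProduct_mulVec {β : Type*} {f : β → Matrix ι ι ℝ} {M : Matrix ι ι ℝ}
    (h : HasSum f M) (x : ι → ℝ) : HasSum (fun k => x ⬝ᵥ f k *ᵥ x) (x ⬝ᵥ M *ᵥ x) := by
  simp only [dotProduct, mulVec]
  exact hasSum_sum fun i _ => (hasSum_sum fun j _ =>
    (Pi.hasSum.1 (Pi.hasSum.1 h i) j).mul_right (x j)).mul_left (x i)

theorem PosSemidef.of_hasSum {β : Type*} {f : β → Matrix ι ι ℝ} {M : Matrix ι ι ℝ}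
    (hf : ∀ k, (f k).PosSemidef) (h : HasSum f M) : M.PosSemidef := by
  refine .of_dotProduct_mulVec_nonneg ?_ fun x => ?_
  · exact h.matrix_conjTranspose.unique (by simpa only [(hf _).isHermitian.eq] using h)
  · exact (hasSum_dotProduct_mulVec h x).nonneg fun k => (hf k).dotProduct_mulVec_nonneg x

theorem PosDef.of_hasSum {f : ℕ → Matrix ι ι ℝ} {M : Matrix ι ι ℝ} (hf : ∀ k, (f k).PosSemidef)
    {m : ℕ} (hm : (∑ k ∈ range m, f k).PosDef) (h : HasSum f M) : M.PosDef := by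
  have htail := PosSemidef.of_hasSum (fun k => hf (k + m)) ((hasSum_nat_add_iff' m).2 h)
  simpa using hm.add_posSemidef htail

theorem PosSemidef.map_pow_s7 {M : Matrix ι ι ℝ} (hM : M.PosSemidef) (k : ℕ) :
    (M.map (· ^ k)).PosSemidef := by
  induction k with
  | zero =>
    convert posSemidef_vecMulVec_self_star (fun _ : ι => (1 : ℝ)) using 1
    ext; simp [vecMulVec]
  | succ k ih =>
    have h : M.map (· ^ (k + 1)) = M.map (· ^ k) ⊙ M := by ext; simp [pow_succ]
    exact h ▸ ih.hadamard hM

theorem PosSemidef.map_exp_sub_one {M : Matrix ι ι ℝ} (hM : M.PosSemidef) :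
    (M.map fun a => Real.exp a - 1).PosSemidef :=
  .of_hasSum (fun k => (hM.map_pow_s7 (k + 1)).smul (by positivity)) (hasSum_map_exp_sub_one M)

theorem PosDef.map_exp_of_posSemidef_sub {A B : Matrix ι ι ℝ} (hB : (B.map Real.exp).PosDef)
    (hAB : (A - B).PosSemidef) : (A.map Real.exp).PosDef := by
  have h : A.map Real.exp =
      B.map Real.exp + B.map Real.exp ⊙ (A - B).map fun a => Real.exp a - 1 := by
    ext i j
    simp [mul_sub, ← Real.exp_add]
  rw [h]
  exact hB.add_posSemidef (hB.posSemidef.hadamard hAB.map_exp_sub_one)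

theorem sum_range_smul_vecMulVec_pow {n : ℕ} (d : ℕ → ℝ) (v : Fin n → ℝ) :
    ∑ k ∈ range n, d k • vecMulVec (v ^ k) (v ^ k) =
      vandermonde v * diagonal (fun k : Fin n => d k) * (vandermonde v)ᴴ := by
  ext i j
  simp only [Matrix.sum_apply, smul_apply, vecMulVec_apply, Pi.pow_apply, mul_apply, diagonal_apply,
    mul_ite, mul_zero, sum_ite_eq', mem_univ, if_true, vandermonde_apply, conjTranspose_apply,
    star_trivial, smul_eq_mul]
  rw [← Fin.sum_univ_eq_sum_range (fun k => d k * (v i ^ k * v j ^ k))]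
  exact sum_congr rfl fun k _ => by ring

theorem posDef_map_exp_vecMulVec {n : ℕ} {v : Fin n → ℝ} (hv : Function.Injective v) :
    ((vecMulVec v v).map Real.exp).PosDef := by
  refine .of_hasSum (m := n) (fun k => ?_) ?_ (hasSum_map_exp_vecMulVec v)
  · simpa using (posSemidef_vecMulVec_self_star (v ^ k)).smul (by positivity)
  · rw [sum_range_smul_vecMulVec_pow]
    exact (PosDef.diagonal fun k => by positivity).mul_mul_conjTranspose_same
      (vecMul_injective_of_isUnit ((isUnit_iff_isUnit_det _).2
        (det_vandermonde_ne_zero_iff.2 hv).isUnit))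

theorem star_dotProduct_map_ofReal_mulVec {A : Matrix ι ι ℝ} (hA : A.IsHermitian) (x : ι → ℂ) :
    star x ⬝ᵥ A.map ((↑) : ℝ → ℂ) *ᵥ x =
      (((fun i => (x i).re) ⬝ᵥ A *ᵥ fun i => (x i).re) +
        ((fun i => (x i).im) ⬝ᵥ A *ᵥ fun i => (x i).im) : ℝ) := by
  have hsymm : ((fun i => (x i).re) ⬝ᵥ A *ᵥ fun i => (x i).im) =
      (fun i => (x i).im) ⬝ᵥ A *ᵥ fun i => (x i).re := by
    rw [dotProduct_mulVec, ← mulVec_transpose, ← conjTranspose_eq_transpose_of_trivial, hA.eq,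
      dotProduct_comm]
  apply Complex.ext
  · simp [dotProduct, mulVec, Complex.mul_re, mul_sum, sum_add_distrib]
  · simpa [dotProduct, mulVec, Complex.mul_im, mul_sum, sum_add_distrib, add_neg_eq_zero] using
      hsymm

theorem PosDef.map_ofReal {A : Matrix ι ι ℝ} (hA : A.PosDef) : (A.map ((↑) : ℝ → ℂ)).PosDef := by
  refine .of_dotProduct_mulVec_pos (hA.isHermitian.map _ fun r => by simp) fun x hx => ?_
  rw [star_dotProduct_map_ofReal_mulVec hA.isHermitian, Complex.zero_lt_real]
  have hre := hA.posSemidef.dotProduct_mulVec_nonneg fun i => (x i).re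
  have him := hA.posSemidef.dotProduct_mulVec_nonneg fun i => (x i).im
  simp only [star_trivial] at hre him
  obtain h | h : (fun i => (x i).re) ≠ 0 ∨ (fun i => (x i).im) ≠ 0 := by
    by_contra! h
    exact hx (funext fun i => Complex.ext (congrFun h.1 i) (congrFun h.2 i))
  · exact add_pos_of_pos_of_nonneg (by simpa using hA.dotProduct_mulVec_pos h) him
  · exact add_pos_of_nonneg_of_pos hre (by simpa using hA.dotProduct_mulVec_pos h)

end Matrix

section RealInnerProductSpace

variable {ι F : Type*} [NormedAddCommGroup F] [InnerProductSpace ℝ F]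

theorem exists_norm_le_one_injective_inner [Finite ι] {z : ι → F} (hz : Function.Injective z) :
    ∃ v : F, ‖v‖ ≤ 1 ∧ Function.Injective fun i => ⟪z i, v⟫_ℝ := by
  obtain ⟨v, hv⟩ := Module.Dual.exists_forall_ne_zero_of_forall_exists
    (fun p : {p : ι × ι // p.1 ≠ p.2} => innerₛₗ ℝ (z p.1.1 - z p.1.2))
    fun p => ⟨z p.1.1 - z p.1.2, by
      rw [innerₛₗ_apply_apply, inner_self_ne_zero, sub_ne_zero]; exact hz.ne p.2⟩
  have hc : 1 + ‖v‖ ≠ 0 := by positivity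
  refine ⟨(1 + ‖v‖)⁻¹ • v, ?_, fun i j hij => by_contra fun hne => hv ⟨(i, j), hne⟩ ?_⟩
  · rw [norm_smul, norm_inv, Real.norm_of_nonneg (by positivity), inv_mul_le_iff₀ (by positivity)]
    linarith
  · simpa [inner_smul_right, inner_sub_left, sub_eq_zero, hc] using hij

theorem posSemidef_gram_sub_vecMulVec_inner [Fintype ι] (z : ι → F) {v : F} (hv : ‖v‖ ≤ 1) :
    (gram ℝ z - vecMulVec (fun i => ⟪z i, v⟫_ℝ) fun i => ⟪z i, v⟫_ℝ).PosSemidef := by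
  refine .of_dotProduct_mulVec_nonneg ((isHermitian_gram ℝ z).sub ?_) fun x => ?_
  · simpa using (posSemidef_vecMulVec_self_star fun i => ⟪z i, v⟫_ℝ).isHermitian
  set w := ∑ i, x i • z i
  have hgram : star x ⬝ᵥ gram ℝ z *ᵥ x = ⟪w, w⟫_ℝ := star_dotProduct_gram_mulVec z x x
  have hxv : x ⬝ᵥ (fun i => ⟪z i, v⟫_ℝ) = ⟪w, v⟫_ℝ := by
    simp [w, dotProduct, sum_inner, real_inner_smul_left]
  have hproj : star x ⬝ᵥ vecMulVec (fun i => ⟪z i, v⟫_ℝ) (fun i => ⟪z i, v⟫_ℝ) *ᵥ x =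
      ⟪w, v⟫_ℝ ^ 2 := by
    rw [star_trivial, vecMulVec_mulVec, op_smul_eq_smul, dotProduct_smul, dotProduct_comm _ x, hxv,
      smul_eq_mul, sq]
  have hcs : ⟪w, v⟫_ℝ ^ 2 ≤ ⟪w, w⟫_ℝ :=
    calc ⟪w, v⟫_ℝ ^ 2 ≤ ⟪w, w⟫_ℝ * ⟪v, v⟫_ℝ := by simpa [sq] using real_inner_mul_inner_self_le w v
      _ ≤ ⟪w, w⟫_ℝ := by
        refine mul_le_of_le_one_right real_inner_self_nonneg ?_
        rw [real_inner_self_eq_norm_sq]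
        nlinarith [norm_nonneg v]
  rw [sub_mulVec, dotProduct_sub, hgram, hproj]
  linarith

theorem posDef_map_exp_gram {n : ℕ} {z : Fin n → F} (hz : Function.Injective z) :
    ((gram ℝ z).map Real.exp).PosDef := by
  obtain ⟨v, hv, hinj⟩ := exists_norm_le_one_injective_inner hz
  exact (posDef_map_exp_vecMulVec hinj).map_exp_of_posSemidef_sub
    (posSemidef_gram_sub_vecMulVec_inner z hv)

theorem posDef_exp_neg_mul_norm_sub_sq {n : ℕ} {t : ℝ} (ht : 0 < t) {z : Fin n → F}
    (hz : Function.Injective z) :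
    (of fun i j => Real.exp (-t * ‖z i - z j‖ ^ 2)).PosDef := by
  set E : Fin n → ℝ := fun i => Real.exp (-t * ‖z i‖ ^ 2)
  have hK : (of fun i j => Real.exp (-t * ‖z i - z j‖ ^ 2)) =
      star (diagonal E) * (gram ℝ fun i => √(2 * t) • z i).map Real.exp * diagonal E := by
    ext i j
    simp only [star_eq_conjTranspose, diagonal_conjTranspose, star_trivial, mul_diagonal,
      diagonal_mul, of_apply, map_apply, gram_apply, real_inner_smul_left, real_inner_smul_right, E]
    rw [← Real.exp_add, ← Real.exp_add, norm_sub_sq_real, ← mul_assoc,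
      Real.mul_self_sqrt (by positivity)]
    ring_nf
  have hE : IsUnit (diagonal E) :=
    isUnit_diagonal.2 (Pi.isUnit_iff.2 fun i => (Real.exp_pos _).ne'.isUnit)
  rw [hK, hE.posDef_star_left_conjugate_iff]
  exact posDef_map_exp_gram ((smul_right_injective F (by positivity)).comp hz)

end RealInnerProductSpace

theorem isStrictPosKernel_ofReal_of_posDef {X : Type*} (k : X → X → ℝ)
    (hk : ∀ n (x : Fin n → X), Function.Injective x → (of fun i j => k (x i) (x j)).PosDef) :
    IsStrictPosKernel fun x y => (k x y : ℂ) := by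
  intro n x hx c hc
  have := (hk n x hx).map_ofReal.dotProduct_mulVec_pos (star_ne_zero.2 hc)
  simpa [dotProduct, mulVec, mul_sum, mul_comm, mul_left_comm] using this

theorem gaussian_isStrictPosKernel_general
    {𝕜 H : Type*} [RCLike 𝕜] [NormedAddCommGroup H] [InnerProductSpace 𝕜 H]
    (t : ℝ) (ht : 0 < t) :
    IsStrictPosKernel (fun x y : H => (Real.exp (-t * ‖x - y‖ ^ 2) : ℂ)) := by
  let _ := InnerProductSpace.rclikeToReal 𝕜 H
  exact isStrictPosKernel_ofReal_of_posDef _ fun _ _ => posDef_exp_neg_mul_norm_sub_sq ht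

/-- For any (real or complex) Hilbert space `H` and any `t > 0`, the Gaussian kernel
`(x,y) ↦ exp (−t ‖x − y‖²)` is strictly positive definite on `H × H`. -/
theorem gaussian_isStrictPosKernel
    {𝕜 H : Type*} [RCLike 𝕜] [NormedAddCommGroup H] [InnerProductSpace 𝕜 H] [CompleteSpace H]
    (t : ℝ) (ht : 0 < t) :
    IsStrictPosKernel (fun x y : H => (Real.exp (-t * ‖x - y‖ ^ 2) : ℂ)) :=
  gaussian_isStrictPosKernel_general (𝕜 := 𝕜) t ht
end

section
/- Let H be a complex Hilbert space and 𝔹_H its open unit ball. Then the Drury–Arveson-type kernel (x,y) ↦ 1/(1 − ⟨x,y⟩_H) is strictly positive definite on 𝔹_H × 𝔹_H. -/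
open scoped ComplexOrder ComplexConjugate InnerProductSpace

/-- `k` is strictly positive definite on a subset `S` of `X`. -/
def IsStrictPosKernelOn {X : Type*} (S : Set X) (k : X → X → ℂ) : Prop :=
  ∀ (n : ℕ) (x : Fin n → X), (∀ i, x i ∈ S) → Function.Injective x →
    ∀ c : Fin n → ℂ, c ≠ 0 →
      0 < ∑ i, ∑ j, c i * conj (c j) * k (x i) (x j)

/-!
Expanding `1 / (1 - ⟪y, x⟫)` as a geometric series turns the quadratic form of the kernel into
`∑ₘ ∑ᵢⱼ cᵢ c̄ⱼ ⟪xⱼ, xᵢ⟫ ^ m`. The finitely many points live in a Euclidean space, where the `m`-th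
summand is `‖∑ᵢ cᵢ • xᵢ^⊗m‖² ≥ 0`. Pairing `∑ᵢ cᵢ • xᵢ^⊗m` with `y^⊗m`, for a `y` such that the
`⟪y, xᵢ⟫` are distinct, gives the moments `∑ᵢ cᵢ ⟪y, xᵢ⟫ ^ m`, and by the Vandermonde determinant
these all vanish only when `c = 0`.
-/

section

variable {𝕜 : Type*} [RCLike 𝕜]

namespace EuclideanSpace

variable {ι : Type*} [Fintype ι]

/-- The tensor power `a ⊗ ⋯ ⊗ a` (`m` factors), in the coordinates indexed by `Fin m → ι`. -/
noncomputable def tensorPow (m : ℕ) (a : EuclideanSpace 𝕜 ι) : EuclideanSpace 𝕜 (Fin m → ι) :=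
  WithLp.toLp 2 fun k => ∏ t, a (k t)

theorem inner_tensorPow (m : ℕ) (a b : EuclideanSpace 𝕜 ι) :
    ⟪tensorPow m a, tensorPow m b⟫_𝕜 = ⟪a, b⟫_𝕜 ^ m := by
  classical
  simp only [PiLp.inner_apply, RCLike.inner_apply, tensorPow, Finset.sum_pow',
    Fintype.piFinset_univ, map_prod, Finset.prod_mul_distrib]

end EuclideanSpace

theorem exists_injective_inner {E : Type*} [NormedAddCommGroup E] [InnerProductSpace 𝕜 E]
    {ι : Type*} [Finite ι] {u : ι → E} (hu : Function.Injective u) :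
    ∃ y : E, Function.Injective fun i => ⟪y, u i⟫_𝕜 := by
  let K : {p : ι × ι // p.1 ≠ p.2} → Submodule 𝕜 E := fun p =>
    LinearMap.ker (innerₛₗ 𝕜 (u p.1.1 - u p.1.2))
  have hK : ∀ p, K p ≠ ⊤ := fun p hp => by
    have : u p.1.1 - u p.1.2 ∈ K p := hp ▸ Submodule.mem_top
    simp only [K, LinearMap.mem_ker, innerₛₗ_apply_apply, inner_self_eq_zero, sub_eq_zero] at this
    exact p.2 (hu this)
  obtain ⟨y, hy⟩ : ∃ y, y ∉ ⋃ p, (K p : Set E) := by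
    by_contra! h
    obtain ⟨p, hp⟩ := Subspace.exists_eq_top_of_iUnion_eq_univ (Set.eq_univ_of_forall h)
    exact hK p hp
  refine ⟨y, fun a b hab => by_contra fun hne => hy (Set.mem_iUnion.2 ⟨⟨(a, b), hne⟩, ?_⟩)⟩
  simp only [K, SetLike.mem_coe, LinearMap.mem_ker, innerₛₗ_apply_apply, inner_sub_left,
    sub_eq_zero]
  rw [← inner_conj_symm, ← inner_conj_symm (u b)]
  exact congrArg conj hab

section GramPowForm

open EuclideanSpace

variable {E F : Type*} [NormedAddCommGroup E] [InnerProductSpace 𝕜 E]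
  [NormedAddCommGroup F] [InnerProductSpace 𝕜 F] {ι : Type*} [Fintype ι]

/-- The Hermitian form of the `m`-th Hadamard power of the Gram matrix of `x`. -/
def gramPowForm (x : ι → E) (c : ι → 𝕜) (m : ℕ) : 𝕜 :=
  ∑ i, ∑ j, c i * conj (c j) * ⟪x j, x i⟫_𝕜 ^ m

theorem gramPowForm_linearIsometry_comp (L : E →ₗᵢ[𝕜] F) (x : ι → E) (c : ι → 𝕜) (m : ℕ) :
    gramPowForm (L ∘ x) c m = gramPowForm x c m := by
  simp only [gramPowForm, Function.comp_apply, L.inner_map_map]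

theorem exists_linearIsometry_euclideanSpace_comp_eq {ι : Type*} [Finite ι] (x : ι → E) :
    ∃ (d : ℕ) (L : EuclideanSpace 𝕜 (Fin d) →ₗᵢ[𝕜] E) (u : ι → EuclideanSpace 𝕜 (Fin d)),
      L ∘ u = x := by
  let V := Submodule.span 𝕜 (Set.range x)
  have : FiniteDimensional 𝕜 V := FiniteDimensional.span_of_finite 𝕜 (Set.finite_range x)
  let b := stdOrthonormalBasis 𝕜 V
  exact ⟨_, V.subtypeₗᵢ.comp b.repr.symm.toLinearIsometry,
    fun i => b.repr ⟨x i, Submodule.subset_span ⟨i, rfl⟩⟩, by ext; simp⟩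

theorem gramPowForm_eq_inner_self {κ : Type*} [Fintype κ] (u : ι → EuclideanSpace 𝕜 κ)
    (c : ι → 𝕜) (m : ℕ) :
    gramPowForm u c m =
      ⟪∑ i, c i • tensorPow m (u i), ∑ i, c i • tensorPow m (u i)⟫_𝕜 := by
  simp only [gramPowForm, sum_inner, inner_sum, inner_smul_left, inner_smul_right,
    inner_tensorPow, Finset.mul_sum]
  exact Finset.sum_congr rfl fun _ _ => Finset.sum_congr rfl fun _ _ => by ring

theorem gramPowForm_nonneg (x : ι → E) (c : ι → 𝕜) (m : ℕ) : 0 ≤ gramPowForm x c m := by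
  obtain ⟨d, L, u, rfl⟩ := exists_linearIsometry_euclideanSpace_comp_eq (𝕜 := 𝕜) x
  rw [gramPowForm_linearIsometry_comp, gramPowForm_eq_inner_self, inner_self_eq_norm_sq_to_K]
  positivity

theorem exists_sum_smul_tensorPow_ne_zero {n : ℕ} {κ : Type*} [Fintype κ]
    {u : Fin n → EuclideanSpace 𝕜 κ} (hu : Function.Injective u) {c : Fin n → 𝕜} (hc : c ≠ 0) :
    ∃ m, ∑ i, c i • tensorPow m (u i) ≠ 0 := by
  obtain ⟨y, hy⟩ := exists_injective_inner (𝕜 := 𝕜) hu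
  by_contra! h
  refine hc (Matrix.eq_zero_of_forall_pow_sum_mul_pow_eq_zero hy fun m => ?_)
  simpa [inner_sum, inner_smul_right, inner_tensorPow] using
    congrArg (⟪tensorPow m y, ·⟫_𝕜) (h m)

theorem exists_gramPowForm_pos {n : ℕ} {x : Fin n → E} (hx : Function.Injective x)
    {c : Fin n → 𝕜} (hc : c ≠ 0) : ∃ m, 0 < gramPowForm x c m := by
  obtain ⟨d, L, u, rfl⟩ := exists_linearIsometry_euclideanSpace_comp_eq (𝕜 := 𝕜) x
  obtain ⟨m, hm⟩ := exists_sum_smul_tensorPow_ne_zero hx.of_comp hc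
  refine ⟨m, ?_⟩
  rw [gramPowForm_linearIsometry_comp, gramPowForm_eq_inner_self, inner_self_eq_norm_sq_to_K]
  exact pow_pos (RCLike.ofReal_pos.2 (norm_pos_iff.2 hm)) 2

end GramPowForm

end

/-- `⟪y, x⟫_ℂ` is linear in `x`: it is the paper's `⟨x, y⟩`, linear in the first variable. -/
theorem druryArveson_isStrictPosKernel_general
    {H : Type*} [NormedAddCommGroup H] [InnerProductSpace ℂ H] :
    IsStrictPosKernelOn {x : H | ‖x‖ < 1}
      (fun x y : H => (1 - ⟪y, x⟫_ℂ)⁻¹) := by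
  intro n x hx hinj c hc
  have hg : ∀ i j, ‖⟪x j, x i⟫_ℂ‖ < 1 := fun i j =>
    (norm_inner_le_norm _ _).trans_lt
      (mul_lt_one_of_nonneg_of_lt_one_left (norm_nonneg _) (hx j) (hx i).le)
  have hsum : HasSum (gramPowForm x c) (∑ i, ∑ j, c i * conj (c j) * (1 - ⟪x j, x i⟫_ℂ)⁻¹) :=
    hasSum_sum fun i _ => hasSum_sum fun j _ =>
      (hasSum_geometric_of_norm_lt_one (hg i j)).mul_left _
  obtain ⟨m, hm⟩ := exists_gramPowForm_pos hinj hc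
  exact hasSum_lt (gramPowForm_nonneg x c) hm hasSum_zero hsum

/-- The Drury–Arveson-type kernel `(x,y) ↦ 1/(1 − ⟨x,y⟩)` is strictly positive definite
on the open unit ball of a complex Hilbert space.  (Here `⟪y, x⟫_ℂ` is linear in `x`,
matching the paper's inner product `⟨x, y⟩` which is linear in the first variable.) -/
theorem druryArveson_isStrictPosKernel
    {H : Type*} [NormedAddCommGroup H] [InnerProductSpace ℂ H] [CompleteSpace H] :
    IsStrictPosKernelOn {x : H | ‖x‖ < 1}
      (fun x y : H => (1 - ⟪y, x⟫_ℂ)⁻¹) :=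
  druryArveson_isStrictPosKernel_general
end

section
/- Let G be a free group on finitely many generators with word length |·|. For every t > 0, the Haagerup kernel K_t(g,h) = exp(−t|h⁻¹g|) is strictly positive definite on G × G. -/
/-!
With `r = exp (-t)` the kernel is `K x y = r ^ |y⁻¹ x|`, and `0 < r < 1`. Given a nonzero
finitely supported `c`, let `g` be a longest element of its support and `p` the word `g` with
its last letter deleted. Since the Cayley graph is a tree, every other `x` with `|x| ≤ |g|`
reaches `g` through `p`, so `K x g = r K x p`. Moving the coefficient `c g` to `p`, scaled by
`r`, therefore lowers the quadratic form by exactly `(1 - r²) |c g|² > 0`, and the total length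
of the support decreases, so induction applies.
-/

open scoped ComplexOrder ComplexConjugate

open Finsupp

section KernelForm

variable {X : Type*} (K : X → X → ℂ)

noncomputable def kernelForm (u v : X →₀ ℂ) : ℂ :=
  u.sum fun x a => v.sum fun y b => a * conj b * K x y

theorem kernelForm_add_left (u u' v : X →₀ ℂ) :
    kernelForm K (u + u') v = kernelForm K u v + kernelForm K u' v :=
  sum_add_index' (fun _ => by simp) fun _ _ _ => by simp only [add_mul, sum_add]

theorem kernelForm_add_right (u v v' : X →₀ ℂ) :
    kernelForm K u (v + v') = kernelForm K u v + kernelForm K u v' := by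
  simp only [kernelForm, ← sum_add]
  refine sum_congr fun x _ => sum_add_index' (fun _ => by simp) fun _ _ _ => ?_
  rw [map_add]; ring

theorem kernelForm_single_left (x : X) (a : ℂ) (v : X →₀ ℂ) :
    kernelForm K (single x a) v = v.sum fun y b => a * conj b * K x y :=
  sum_single_index (by simp)

theorem kernelForm_single_right (u : X →₀ ℂ) (y : X) (b : ℂ) :
    kernelForm K u (single y b) = u.sum fun x a => a * conj b * K x y := by
  simp [kernelForm]

theorem kernelForm_single_single (x : X) (a : ℂ) :
    kernelForm K (single x a) (single x a) = Complex.normSq a * K x x := by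
  rw [kernelForm_single_left, sum_single_index (by simp), Complex.mul_conj]

theorem kernelForm_zero_left (v : X →₀ ℂ) : kernelForm K 0 v = 0 := sum_zero_index

theorem kernelForm_single_left_congr {r : ℝ} {g p : X} (a : ℂ) {v : X →₀ ℂ}
    (h : ∀ y ∈ v.support, K g y = r * K p y) :
    kernelForm K (single g a) v = kernelForm K (single p (r * a)) v := by
  rw [kernelForm_single_left, kernelForm_single_left]
  exact sum_congr fun y hy => by rw [h y hy]; ring

theorem kernelForm_single_right_congr {r : ℝ} {g p : X} (a : ℂ) {u : X →₀ ℂ}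
    (h : ∀ x ∈ u.support, K x g = r * K x p) :
    kernelForm K u (single g a) = kernelForm K u (single p (r * a)) := by
  rw [kernelForm_single_right, kernelForm_single_right]
  exact sum_congr fun x hx => by rw [h x hx, map_mul, Complex.conj_ofReal]; ring

theorem kernelForm_add_single_eq {r : ℝ} {g p : X} (a : ℂ) {u : X →₀ ℂ}
    (hg : K g g = 1) (hp : K p p = 1)
    (hleft : ∀ x ∈ u.support, K x g = r * K x p)
    (hright : ∀ y ∈ u.support, K g y = r * K p y) :
    kernelForm K (u + single g a) (u + single g a) =
      kernelForm K (u + single p (r * a)) (u + single p (r * a)) +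
        ((1 - r ^ 2) * Complex.normSq a : ℝ) := by
  simp only [kernelForm_add_left, kernelForm_add_right, kernelForm_single_single, hg, hp,
    kernelForm_single_left_congr K a hright, kernelForm_single_right_congr K a hleft,
    Complex.normSq_mul, Complex.normSq_ofReal]
  push_cast
  ring

end KernelForm

theorem Finset.sum_lt_sum_of_subset_insert_erase {X : Type*} [DecidableEq X] (f : X → ℕ)
    {s t : Finset X} {g p : X} (hg : g ∈ s) (hpg : f p < f g) (hts : t ⊆ insert p (s.erase g)) :
    ∑ x ∈ t, f x < ∑ x ∈ s, f x := by
  calc ∑ x ∈ t, f x ≤ ∑ x ∈ insert p (s.erase g), f x := Finset.sum_le_sum_of_subset hts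
    _ ≤ f p + ∑ x ∈ s.erase g, f x := by
      by_cases hp : p ∈ s.erase g
      · rw [Finset.insert_eq_of_mem hp]; omega
      · rw [Finset.sum_insert hp]
    _ < f g + ∑ x ∈ s.erase g, f x := by omega
    _ = ∑ x ∈ s, f x := Finset.add_sum_erase s f hg

/-- `ht` is the height in a rooted tree and `p` is the parent of `g`. -/
theorem kernelForm_pos_of_parent {X : Type*} (K : X → X → ℂ) (ht : X → ℕ) {r : ℝ}
    (hr : |r| < 1) (hdiag : ∀ x, K x x = 1) (hroot : ∀ x y, ht x = 0 → ht y = 0 → x = y)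
    (hparent : ∀ g, ht g ≠ 0 → ∃ p, ht p < ht g ∧
      ∀ x, ht x ≤ ht g → x ≠ g → K x g = r * K x p ∧ K g x = r * K p x)
    (c : X →₀ ℂ) (hc : c ≠ 0) : 0 < kernelForm K c c := by
  classical
  induction hw : ∑ x ∈ c.support, (ht x + 1) using Nat.strong_induction_on generalizing c with
  | _ w ih =>
  obtain ⟨g, hg, hgmax⟩ := Finset.exists_max_image c.support ht (support_nonempty_iff.2 hc)
  have hcg : 0 < Complex.normSq (c g) := Complex.normSq_pos.2 (mem_support_iff.1 hg)
  have hrest : ∀ x ∈ (c.erase g).support, ht x ≤ ht g ∧ x ≠ g := fun x hx => by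
    rw [support_erase, Finset.mem_erase] at hx
    exact ⟨hgmax x hx.2, hx.1⟩
  rw [← erase_add_single g c]
  rcases eq_or_ne (ht g) 0 with hg0 | hg0
  · have hu : c.erase g = 0 := by
      refine support_eq_empty.1 (Finset.eq_empty_of_forall_notMem fun x hx => ?_)
      obtain ⟨hxle, hne⟩ := hrest x hx
      exact hne (hroot x g (by omega) hg0)
    rw [hu, zero_add, kernelForm_single_single, hdiag, mul_one]
    exact_mod_cast hcg
  obtain ⟨p, hpg, hp⟩ := hparent g hg0
  rw [kernelForm_add_single_eq K (c g) (hdiag g) (hdiag p)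
    (fun x hx => (hp x (hrest x hx).1 (hrest x hx).2).1)
    (fun x hx => (hp x (hrest x hx).1 (hrest x hx).2).2)]
  set c' := c.erase g + single p (r * c g)
  have hc' : 0 ≤ kernelForm K c' c' := by
    rcases eq_or_ne c' 0 with h0 | h0
    · rw [h0, kernelForm_zero_left]
    refine (ih _ ?_ c' h0 rfl).le
    refine hw ▸ Finset.sum_lt_sum_of_subset_insert_erase (fun x => ht x + 1) hg
      (Nat.succ_lt_succ hpg) ?_
    refine support_add.trans (Finset.union_subset ?_ (support_single_subset.trans ?_))
    · rw [support_erase]; exact Finset.subset_insert _ _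
    · exact Finset.singleton_subset_iff.2 (Finset.mem_insert_self _ _)
  have hr2 : 0 < 1 - r ^ 2 := by nlinarith [abs_nonneg r, sq_abs r]
  exact add_pos_of_nonneg_of_pos hc' (by exact_mod_cast mul_pos hr2 hcg)

theorem List.exists_append_append_forall_head?_ne {β : Type*} (u w : List β) :
    ∃ s u' w', u = s ++ u' ∧ w = s ++ w' ∧
      ∀ b ∈ u'.head?, ∀ d ∈ w'.head?, b ≠ d := by
  classical
  induction u generalizing w with
  | nil => exact ⟨[], [], w, rfl, rfl, by simp⟩
  | cons b u ih =>
    cases w with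
    | nil => exact ⟨[], b :: u, [], rfl, rfl, by simp⟩
    | cons d w =>
      by_cases hbd : b = d
      · obtain ⟨s, u', w', hu, hw, hne⟩ := ih w
        exact ⟨b :: s, u', w', by rw [hu, cons_append], by rw [hw, hbd, cons_append], hne⟩
      · exact ⟨[], b :: u, d :: w, rfl, rfl, by simpa using hbd⟩

namespace FreeGroup

variable {α : Type*}

theorem IsReduced.invRev [DecidableEq α] {L : List (α × Bool)} (h : IsReduced L) :
    IsReduced (invRev L) := by
  rw [isReduced_iff_reduce_eq, reduce_invRev, h.reduce_eq]

theorem mk_append_inv_mul_mk_append (s u v : List (α × Bool)) :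
    (mk (s ++ u))⁻¹ * mk (s ++ v) = mk (invRev u ++ v) := by
  rw [← mul_mk, ← mul_mk, mul_inv_rev, mul_assoc, inv_mul_cancel_left, inv_mk, mul_mk]

variable [DecidableEq α]

theorem norm_mk_of_isReduced {L : List (α × Bool)} (h : IsReduced L) :
    (mk L).norm = L.length := by
  rw [norm, toWord_mk, h.reduce_eq]

theorem norm_inv_mul_comm (x y : FreeGroup α) : (x⁻¹ * y).norm = (y⁻¹ * x).norm := by
  rw [← norm_inv_eq, mul_inv_rev, inv_inv]

theorem norm_inv_mul_of_toWord_eq_append {x y : FreeGroup α} {s u v : List (α × Bool)}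
    (hx : x.toWord = s ++ u) (hy : y.toWord = s ++ v)
    (huv : ∀ b ∈ u.head?, ∀ d ∈ v.head?, b ≠ d) :
    (x⁻¹ * y).norm = u.length + v.length := by
  have hxy : x⁻¹ * y = mk (invRev u ++ v) := by
    rw [← mk_toWord (x := x), ← mk_toWord (x := y), hx, hy, mk_append_inv_mul_mk_append]
  have hu : IsReduced u := (hx ▸ isReduced_toWord).infix (List.suffix_append s u).isInfix
  have hv : IsReduced v := (hy ▸ isReduced_toWord).infix (List.suffix_append s v).isInfix
  have hjoin : ∀ b ∈ (invRev u).getLast?, ∀ d ∈ v.head?, b.1 = d.1 → b.2 = d.2 := by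
    simp only [invRev, List.getLast?_reverse, List.head?_map, Option.mem_map]
    rintro _ ⟨⟨b₁, b₂⟩, hb, rfl⟩ ⟨d₁, d₂⟩ hd (rfl : b₁ = d₁)
    have := huv _ hb _ hd
    cases b₂ <;> cases d₂ <;> simp_all
  have hred : IsReduced (invRev u ++ v) := List.isChain_append.2 ⟨hu.invRev, hv, hjoin⟩
  rw [hxy, norm_mk_of_isReduced hred, List.length_append, invRev_length]

/-- `p` is `g` with its last letter deleted. -/
theorem exists_norm_lt_and_norm_inv_mul_eq_succ {g : FreeGroup α} (hg : g ≠ 1) :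
    ∃ p : FreeGroup α, p.norm < g.norm ∧
      ∀ x : FreeGroup α, x.norm ≤ g.norm → x ≠ g →
        (x⁻¹ * g).norm = (x⁻¹ * p).norm + 1 := by
  obtain ⟨w, a, hwa⟩ : ∃ w a, g.toWord = w ++ [a] :=
    (List.eq_nil_or_concat' g.toWord).resolve_left (toWord_eq_nil_iff.not.2 hg)
  have hw : IsReduced w := (hwa ▸ isReduced_toWord).infix (List.prefix_append w [a]).isInfix
  have hpw : (mk w).toWord = w := by rw [toWord_mk, hw.reduce_eq]
  have hgw : g.norm = w.length + 1 := by
    rw [norm, hwa, List.length_append, List.length_singleton]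
  refine ⟨mk w, by rw [norm_mk_of_isReduced hw, hgw]; exact Nat.lt_succ_self _,
    fun x hx hxg => ?_⟩
  obtain ⟨s, u, v, hxu, hwv, huv⟩ := List.exists_append_append_forall_head?_ne x.toWord w
  have hgv : g.toWord = s ++ (v ++ [a]) := by rw [hwa, hwv, List.append_assoc]
  rw [norm_inv_mul_of_toWord_eq_append hxu (hpw.trans hwv) huv,
    norm_inv_mul_of_toWord_eq_append hxu hgv, List.length_append, List.length_singleton,
    Nat.add_assoc]
  intro b hb d hd
  cases v with
  | cons e v => exact huv b hb d (by simpa using hd)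
  | nil =>
    rw [List.append_nil] at hwv
    subst hwv
    have hlen : u.length ≤ 1 := by
      rw [hgw, norm, hxu, List.length_append] at hx
      omega
    obtain rfl : a = d := by simpa using hd
    rcases u with _ | ⟨b', _ | ⟨b'', u⟩⟩
    · simp at hb
    · obtain rfl : b' = b := by simpa using hb
      rintro rfl
      exact hxg (toWord_injective (by rw [hxu, hwa]))
    · simp at hlen

theorem kernelForm_pow_norm_inv_mul_pos {r : ℝ} (hr : |r| < 1) {c : FreeGroup α →₀ ℂ}
    (hc : c ≠ 0) :
    0 < kernelForm (fun x y : FreeGroup α => (r : ℂ) ^ (y⁻¹ * x).norm) c c := by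
  refine kernelForm_pos_of_parent _ norm hr (by simp) (fun x y hx hy => ?_) (fun g hg => ?_)
    c hc
  · rw [norm_eq_zero.1 hx, norm_eq_zero.1 hy]
  obtain ⟨p, hpg, hp⟩ := exists_norm_lt_and_norm_inv_mul_eq_succ (norm_eq_zero.not.1 hg)
  refine ⟨p, hpg, fun x hx hxg => ?_⟩
  simp only [norm_inv_mul_comm _ x, hp x hx hxg, pow_succ]
  constructor <;> ring

end FreeGroup

theorem isStrictPosKernel_of_kernelForm_pos {X : Type*} {K : X → X → ℂ}
    (h : ∀ c : X →₀ ℂ, c ≠ 0 → 0 < kernelForm K c c) : IsStrictPosKernel K := by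
  intro n x hx c hc
  set C := mapDomain x (equivFunOnFinite.symm c)
  have hC : C ≠ 0 := by
    rw [Ne, ← mapDomain_zero (f := x)]
    exact (mapDomain_injective hx).ne fun h => hc (by simpa using congrArg (⇑) h)
  refine (h C hC).trans_eq ?_
  rw [kernelForm, sum_mapDomain_index (by simp) fun _ _ _ => by simp only [add_mul, sum_add],
    sum_fintype _ _ (by simp)]
  refine Finset.sum_congr rfl fun i _ => ?_
  rw [sum_mapDomain_index (by simp) fun _ _ _ => by rw [map_add]; ring,
    sum_fintype _ _ (by simp)]
  simp

/-- For a free group on finitely many generators with word length `|·|` and any `t > 0`,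
the Haagerup kernel `(g,h) ↦ exp (−t |h⁻¹ g|)` is strictly positive definite. -/
theorem haagerup_kernel_isStrictPosKernel (N : ℕ) (t : ℝ) (ht : 0 < t) :
    IsStrictPosKernel (fun g h : FreeGroup (Fin N) =>
      (Real.exp (-t * (FreeGroup.norm (h⁻¹ * g) : ℝ)) : ℂ)) := by
  have hK : (fun g h : FreeGroup (Fin N) =>
      (Real.exp (-t * (FreeGroup.norm (h⁻¹ * g) : ℝ)) : ℂ)) =
        fun g h => (Real.exp (-t) : ℂ) ^ (h⁻¹ * g).norm := by
    ext g h
    rw [mul_comm, Real.exp_nat_mul, Complex.ofReal_pow]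
  rw [hK]
  refine isStrictPosKernel_of_kernelForm_pos fun c => FreeGroup.kernelForm_pow_norm_inv_mul_pos ?_
  rw [abs_of_pos (Real.exp_pos _), Real.exp_lt_one_iff]
  linarith
end

section
/- Let X be a locally compact Hausdorff space and k a real-valued continuous kernel on X × X such that the RKHS H_k separates points of X. Then for every compact set K ⊆ X, every ε > 0 and every f ∈ C(K), there exist real numbers c_1,…,c_N and points a_1,…,a_N ∈ X such that sup_{x∈K} |f(x) − ∑_{j=1}^N c_j exp(k(x,a_j))| < ε. -/
/-!
The kernel `exp ∘ k` has an explicit feature map `Ψ x = expFeature (b.repr (Φ x))` into `ℓ²` over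
finite words `(n, α)` in a Hilbert basis `b` of `H`: since `exp ⟪u, w⟫ = ∑ₙ ⟪u, w⟫ⁿ / n!`, the
coordinates `∏ₗ ⟪b (α l), Φ x⟫ / √n!` of `Ψ x` do the job. Hence every monomial in the coordinate
functions `x ↦ ⟪b i, Φ x⟫` is of the form `x ↦ ⟪u, Ψ x⟫`, and so is every element of the
subalgebra they generate. Splitting `u` along the closed span of `Ψ(X)` and its orthogonal
complement shows that each such function is a uniform limit on `K` of combinations
`∑ cⱼ exp (k · aⱼ)`. The coordinate functions separate the points of `K`, so by Stone–Weierstrass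
that subalgebra is dense in `C(K, ℝ)`.
-/

open scoped InnerProductSpace Nat lp Topology

open Real Filter Set

theorem continuous_of_continuous_inner {X E : Type*} [TopologicalSpace X]
    [NormedAddCommGroup E] [InnerProductSpace ℝ E] {Ψ : X → E}
    (h : Continuous fun p : X × X => ⟪Ψ p.1, Ψ p.2⟫_ℝ) : Continuous Ψ := by
  refine continuous_iff_continuousAt.2 fun x => tendsto_iff_norm_sub_tendsto_zero.2 ?_
  have hdiag : Tendsto (fun y => ⟪Ψ y, Ψ y⟫_ℝ) (𝓝 x) (𝓝 ⟪Ψ x, Ψ x⟫_ℝ) :=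
    (h.comp (continuous_id.prodMk continuous_id)).tendsto x
  have hcol : Tendsto (fun y => ⟪Ψ y, Ψ x⟫_ℝ) (𝓝 x) (𝓝 ⟪Ψ x, Ψ x⟫_ℝ) :=
    (h.comp (continuous_id.prodMk continuous_const)).tendsto x
  have hsq : Tendsto (fun y => ‖Ψ y - Ψ x‖ ^ 2) (𝓝 x) (𝓝 0) := by
    have := ((hdiag.sub (hcol.const_mul 2)).add_const ⟪Ψ x, Ψ x⟫_ℝ)
    simpa [norm_sub_sq_real, real_inner_self_eq_norm_sq, two_mul] using this
  simpa [Real.sqrt_sq (norm_nonneg _)] using hsq.sqrt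

section innerComp

variable {Y E : Type*} [TopologicalSpace Y] [NormedAddCommGroup E] [InnerProductSpace ℝ E]

noncomputable def innerCompCLM (g : C(Y, E)) : E →L[ℝ] C(Y, ℝ) where
  toFun u := ⟨fun y => ⟪u, g y⟫_ℝ, by fun_prop⟩
  map_add' u v := by ext; simp [inner_add_left]
  map_smul' c u := by ext; simp [real_inner_smul_left]
  cont := (ContinuousMap.curry ⟨fun p : E × Y => ⟪p.1, g p.2⟫_ℝ, by fun_prop⟩).continuous

@[simp]
theorem innerCompCLM_apply (g : C(Y, E)) (u : E) (y : Y) : innerCompCLM g u y = ⟪u, g y⟫_ℝ :=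
  rfl

theorem range_innerCompCLM_subset [CompleteSpace E] (g : C(Y, E)) {s : Set E}
    (hg : ∀ y, g y ∈ s) :
    range (innerCompCLM g) ⊆ (Submodule.span ℝ (innerCompCLM g '' s)).topologicalClosure := by
  rintro _ ⟨u, rfl⟩
  set M := (Submodule.span ℝ s).topologicalClosure
  have : CompleteSpace M := (Submodule.isClosed_topologicalClosure _).completeSpace_coe
  obtain ⟨v, hv, w, hw, rfl⟩ := M.exists_add_mem_mem_orthogonal u
  have hw0 : innerCompCLM g w = 0 := by
    ext y
    exact Submodule.inner_left_of_mem_orthogonal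
      ((Submodule.span ℝ s).le_topologicalClosure (Submodule.subset_span (hg y))) hw
  rw [map_add, hw0, add_zero, Submodule.topologicalClosure_coe]
  refine closure_mono (Submodule.image_span_subset_span (innerCompCLM g : E →ₗ[ℝ] C(Y, ℝ)) s) ?_
  exact image_closure_subset_closure_image (innerCompCLM g).continuous ⟨v, hv, rfl⟩

theorem topologicalClosure_span_innerCompCLM_image_eq_top [CompactSpace Y] [CompleteSpace E]
    (g : C(Y, E)) {s : Set E} (hg : ∀ y, g y ∈ s) {A : Subalgebra ℝ C(Y, ℝ)}
    (hA : A.SeparatesPoints) (hAg : (A : Set C(Y, ℝ)) ⊆ range (innerCompCLM g)) :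
    (Submodule.span ℝ (innerCompCLM g '' s)).topologicalClosure = ⊤ := by
  rw [eq_top_iff]
  intro f _
  have hf : f ∈ A.topologicalClosure := by
    rw [ContinuousMap.subalgebra_topologicalClosure_eq_top_of_separatesPoints A hA]
    trivial
  rw [← SetLike.mem_coe, Subalgebra.topologicalClosure_coe] at hf
  exact closure_minimal (hAg.trans (range_innerCompCLM_subset g hg))
    (Submodule.isClosed_topologicalClosure _) hf

end innerComp

theorem Submonoid.exists_fin_prod_eq_of_mem_closure_range {M ι : Type*} [CommMonoid M]
    {f : ι → M} {m : M} (hm : m ∈ Submonoid.closure (range f)) :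
    ∃ (n : ℕ) (α : Fin n → ι), ∏ l, f (α l) = m := by
  induction hm using Submonoid.closure_induction with
  | mem _ h =>
    obtain ⟨i, rfl⟩ := h
    exact ⟨1, fun _ => i, by simp⟩
  | one => exact ⟨0, Fin.elim0, by simp⟩
  | mul _ _ _ _ ha hb =>
    obtain ⟨n, α, rfl⟩ := ha
    obtain ⟨n', α', rfl⟩ := hb
    exact ⟨n + n', Fin.append α α', by simp [Fin.prod_univ_add]⟩

section expFeature

variable {ι : Type*}

theorem hasSum_fin_pi_prod {p : ι → ℝ} (hp : Summable p) (n : ℕ) :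
    HasSum (fun α : Fin n → ι => ∏ l, p (α l)) ((∑' i, p i) ^ n) := by
  induction n generalizing p with
  | zero => simp
  | succ n ih =>
    rw [← (Fin.consEquiv fun _ => ι).hasSum_iff, pow_succ']
    have hnorm : Summable fun β : Fin n → ι => ‖∏ l, p (β l)‖ := by
      simpa [Finset.abs_prod] using (ih hp.abs).summable
    have hprod := summable_mul_of_summable_norm (f := p) (g := fun β : Fin n → ι => ∏ l, p (β l))
      hp.norm hnorm
    have hcons : (fun α : Fin (n + 1) → ι => ∏ l, p (α l)) ∘ Fin.consEquiv (fun _ => ι) =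
        fun q => p q.1 * ∏ l, p (q.2 l) := by
      ext q
      simp [Fin.prod_univ_succ]
    simpa only [hcons] using hp.hasSum.mul (ih hp) hprod

theorem hasSum_sigma_prod_div_factorial {p : ι → ℝ} (hp : Summable p) :
    HasSum (fun j : Σ n, Fin n → ι => (∏ l, p (j.2 l)) / j.1 !) (exp (∑' i, p i)) := by
  have hfib : ∀ {q : ι → ℝ}, Summable q → ∀ n,
      HasSum (fun α : Fin n → ι => (∏ l, q (α l)) / n !) ((∑' i, q i) ^ n / n !) :=
    fun hq n => (hasSum_fin_pi_prod hq n).div_const _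
  have habs : Summable fun j : Σ n, Fin n → ι => |(∏ l, p (j.2 l)) / j.1 !| := by
    refine (summable_sigma_of_nonneg fun _ => abs_nonneg _).2 ⟨fun n => ?_, ?_⟩
    · simpa [abs_div, Finset.abs_prod] using (hfib hp.abs n).summable
    · simpa [abs_div, Finset.abs_prod, ((hfib hp.abs _).tsum_eq)] using
        Real.summable_pow_div_factorial (∑' i, |p i|)
  refine HasSum.sigma_of_hasSum ?_ (hfib hp) habs.of_abs
  rw [Real.exp_eq_exp_ℝ]
  exact NormedSpace.expSeries_div_hasSum_exp _

theorem lp.hasSum_inner_real (u w : ℓ²(ι, ℝ)) : HasSum (fun i => u i * w i) ⟪u, w⟫_ℝ := by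
  simpa only [Real.inner_apply] using lp.hasSum_inner (𝕜 := ℝ) u w

noncomputable def expFeatureCoeff (u : ι → ℝ) (j : Σ n, Fin n → ι) : ℝ :=
  (∏ l, u (j.2 l)) / √(j.1 !)

theorem hasSum_expFeatureCoeff_mul {u w : ι → ℝ} {s : ℝ} (h : HasSum (fun i => u i * w i) s) :
    HasSum (fun j => expFeatureCoeff u j * expFeatureCoeff w j) (exp s) := by
  have hcoeff : ∀ j : Σ n, Fin n → ι, expFeatureCoeff u j * expFeatureCoeff w j =
      (∏ l, u (j.2 l) * w (j.2 l)) / j.1 ! := fun j => by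
    rw [expFeatureCoeff, expFeatureCoeff, div_mul_div_comm, Real.mul_self_sqrt (by positivity),
      Finset.prod_mul_distrib]
  simpa only [hcoeff, h.tsum_eq] using hasSum_sigma_prod_div_factorial h.summable

theorem memℓp_expFeatureCoeff (u : ℓ²(ι, ℝ)) : Memℓp (expFeatureCoeff u) 2 :=
  memℓp_gen <| by simpa [sq] using (hasSum_expFeatureCoeff_mul (lp.hasSum_inner_real u u)).summable

/-- The feature map of the kernel `exp ⟪u, w⟫`: its coordinate at the word `(n, α)` is the
`α`-coordinate of `u ^ ⊗n / √n!`. -/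
noncomputable def expFeature (u : ℓ²(ι, ℝ)) : ℓ²((Σ n, Fin n → ι), ℝ) :=
  ⟨expFeatureCoeff u, memℓp_expFeatureCoeff u⟩

theorem inner_expFeature (u w : ℓ²(ι, ℝ)) :
    ⟪expFeature u, expFeature w⟫_ℝ = exp ⟪u, w⟫_ℝ :=
  (lp.hasSum_inner_real (expFeature u) (expFeature w)).unique
    (hasSum_expFeatureCoeff_mul (lp.hasSum_inner_real u w))

theorem inner_smul_single_expFeature [DecidableEq ι] (u : ℓ²(ι, ℝ)) {n : ℕ} (α : Fin n → ι) :
    ⟪√(n !) • lp.single 2 (⟨n, α⟩ : Σ n, Fin n → ι) (1 : ℝ), expFeature u⟫_ℝ = ∏ l, u (α l) := by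
  rw [real_inner_smul_left, lp.inner_single_left, Real.inner_apply, one_mul]
  exact mul_div_cancel₀ _ (by positivity)

theorem continuous_expFeature : Continuous (expFeature : ℓ²(ι, ℝ) → _) :=
  continuous_of_continuous_inner <| by
    simpa only [inner_expFeature] using (continuous_fst.inner continuous_snd).rexp

variable {Y : Type*} [TopologicalSpace Y]

theorem separatesPoints_adjoin_range_evalCLM_comp {g : C(Y, ℓ²(ι, ℝ))} (hg : Function.Injective g) :
    (Algebra.adjoin ℝ (range fun i =>
      (lp.evalCLM ℝ (fun _ : ι => ℝ) 2 i : C(ℓ²(ι, ℝ), ℝ)).comp g)).SeparatesPoints := by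
  intro x y hxy
  obtain ⟨i, hi⟩ : ∃ i, g x i ≠ g y i := by
    by_contra! h
    exact hxy (hg (lp.ext (funext h)))
  exact ⟨_, ⟨_, Algebra.subset_adjoin ⟨i, rfl⟩, rfl⟩, hi⟩

theorem adjoin_range_evalCLM_comp_subset_range_innerCompCLM (g : C(Y, ℓ²(ι, ℝ))) :
    (Algebra.adjoin ℝ (range fun i =>
      (lp.evalCLM ℝ (fun _ : ι => ℝ) 2 i : C(ℓ²(ι, ℝ), ℝ)).comp g) : Set C(Y, ℝ)) ⊆
      range (innerCompCLM ⟨expFeature ∘ g, continuous_expFeature.comp g.continuous⟩) := by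
  classical
  intro m hm
  rw [SetLike.mem_coe, ← Subalgebra.mem_toSubmodule, Algebra.adjoin_eq_span] at hm
  refine (Submodule.span_le (p := LinearMap.range
    (innerCompCLM ⟨expFeature ∘ g, continuous_expFeature.comp g.continuous⟩ :
      ℓ²((Σ n, Fin n → ι), ℝ) →ₗ[ℝ] C(Y, ℝ))).2 ?_) hm
  rintro _ hmono
  obtain ⟨n, α, rfl⟩ := Submonoid.exists_fin_prod_eq_of_mem_closure_range hmono
  refine ⟨√(n !) • lp.single 2 ⟨n, α⟩ 1, ContinuousMap.ext fun y => ?_⟩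
  exact (inner_smul_single_expFeature (g y) α).trans (by simp; rfl)

end expFeature

theorem universal_approximation_exp_kernel_general
    {X : Type*} [TopologicalSpace X]
    (k : X → X → ℝ) (hcont : Continuous fun p : X × X => k p.1 p.2)
    {H : Type*} [NormedAddCommGroup H] [InnerProductSpace ℝ H] [CompleteSpace H]
    (Φ : X → H) (hk : ∀ x y, k x y = ⟪Φ x, Φ y⟫_ℝ)
    (hsep : ∀ x y : X, x ≠ y → ∃ v : H, ⟪v, Φ x⟫_ℝ ≠ ⟪v, Φ y⟫_ℝ)
    (K : Set X) (hK : IsCompact K) (f : C(K, ℝ)) (ε : ℝ) (hε : 0 < ε) :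
    ∃ (N : ℕ) (c : Fin N → ℝ) (a : Fin N → X),
      ∀ x : K, |f x - ∑ j, c j * Real.exp (k x (a j))| < ε := by
  obtain ⟨w, b, -⟩ := exists_hilbertBasis ℝ H
  have hΦ : Continuous Φ := continuous_of_continuous_inner (by simpa only [← hk] using hcont)
  have : CompactSpace K := isCompact_iff_compactSpace.mp hK
  let g : C(K, ℓ²(w, ℝ)) := ⟨fun x => b.repr (Φ x), by fun_prop⟩
  have hg : Function.Injective g := fun x y hxy => Subtype.ext <| by_contra fun hne => by
    obtain ⟨v, hv⟩ := hsep x y hne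
    exact hv (by rw [b.repr.injective hxy])
  have hdense := topologicalClosure_span_innerCompCLM_image_eq_top
    ⟨expFeature ∘ g, continuous_expFeature.comp g.continuous⟩
    (s := range fun a => expFeature (b.repr (Φ a))) (fun x => ⟨x.1, rfl⟩)
    (separatesPoints_adjoin_range_evalCLM_comp hg)
    (adjoin_range_evalCLM_comp_subset_range_innerCompCLM g)
  have hf := hdense ▸ Submodule.mem_top (x := f)
  rw [← SetLike.mem_coe, Submodule.topologicalClosure_coe] at hf
  obtain ⟨e, he, hfe⟩ := Metric.mem_closure_iff.1 hf ε hε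
  rw [← range_comp] at he
  obtain ⟨N, c, e', rfl⟩ := Submodule.mem_span_set'.1 he
  choose a ha using fun j => (e' j).2
  refine ⟨N, c, a, fun x => lt_of_le_of_lt ?_ hfe⟩
  have hexp : ∀ j, (e' j : C(K, ℝ)) x = exp (k x (a j)) := fun j => by
    simp [← ha j, g, inner_expFeature, hk, real_inner_comm]
  calc |f x - ∑ j, c j * exp (k x (a j))|
      = dist (f x) ((∑ j, c j • (e' j : C(K, ℝ))) x) := by simp [Real.dist_eq, hexp]
    _ ≤ _ := ContinuousMap.dist_apply_le_dist x

/-- Universal approximation: let `X` be a locally compact Hausdorff space and `k` a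
real-valued continuous kernel on `X × X` whose RKHS `H_k` separates the points of `X`
(the RKHS is realized as the functions `x ↦ ⟪v, Φ x⟫` for a feature map `Φ : X → H`
with `k x y = ⟪Φ x, Φ y⟫`).  Then for every compact `K ⊆ X`, every `ε > 0` and every
continuous `f : K → ℝ` there are reals `c₁, …, c_N` and points `a₁, …, a_N ∈ X` with
`sup_{x ∈ K} |f x − ∑ⱼ cⱼ exp (k x aⱼ)| < ε`. -/
theorem universal_approximation_exp_kernel
    {X : Type*} [TopologicalSpace X] [LocallyCompactSpace X] [T2Space X]
    (k : X → X → ℝ) (hcont : Continuous fun p : X × X => k p.1 p.2)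
    {H : Type*} [NormedAddCommGroup H] [InnerProductSpace ℝ H] [CompleteSpace H]
    (Φ : X → H) (hk : ∀ x y, k x y = ⟪Φ x, Φ y⟫_ℝ)
    (hsep : ∀ x y : X, x ≠ y → ∃ v : H, ⟪v, Φ x⟫_ℝ ≠ ⟪v, Φ y⟫_ℝ)
    (K : Set X) (hK : IsCompact K) (f : C(K, ℝ)) (ε : ℝ) (hε : 0 < ε) :
    ∃ (N : ℕ) (c : Fin N → ℝ) (a : Fin N → X),
      ∀ x : K, |f x - ∑ j, c j * Real.exp (k x (a j))| < ε :=
  universal_approximation_exp_kernel_general k hcont Φ hk hsep K hK f ε hε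
end

section
/- Universal approximation for the Gaussian kernel: for every compact subset K of ℝⁿ, every ε > 0 and every continuous function f : K → ℝ, there exist c_1,…,c_N ∈ ℝ and a_1,…,a_N ∈ ℝⁿ such that sup_{x∈K} |f(x) − ∑_{j=1}^N c_j exp(−‖x − a_j‖²)| < ε. -/
open scoped RealInnerProductSpace

/-- Universal approximation theorem for the Gaussian kernel: every continuous real-valued
function on a compact subset `K ⊆ ℝⁿ` can be uniformly approximated by finite linear
combinations of Gaussians `x ↦ exp (−‖x − a‖²)`. -/
theorem universal_approximation_gaussian (n : ℕ)
    (K : Set (EuclideanSpace ℝ (Fin n))) (hK : IsCompact K)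
    (f : C(K, ℝ)) (ε : ℝ) (hε : 0 < ε) :
    ∃ (N : ℕ) (c : Fin N → ℝ) (a : Fin N → EuclideanSpace ℝ (Fin n)),
      ∀ x : K, |f x - ∑ j, c j * Real.exp (-‖(x : EuclideanSpace ℝ (Fin n)) - a j‖ ^ 2)| < ε := by
  haveI : CompactSpace K := isCompact_iff_compactSpace.mp hK
  -- the exponential maps x ↦ exp⟪x, w⟫
  let Φ : EuclideanSpace ℝ (Fin n) → C(K, ℝ) := fun w =>
    ⟨fun x => Real.exp ⟪(x : EuclideanSpace ℝ (Fin n)), w⟫,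
      Real.continuous_exp.comp (continuous_subtype_val.inner continuous_const)⟩
  have hΦ : ∀ w x, Φ w x = Real.exp ⟪(x : EuclideanSpace ℝ (Fin n)), w⟫ := fun _ _ => rfl
  -- they form a submonoid
  let M : Submonoid C(K, ℝ) :=
  { carrier := Set.range Φ
    one_mem' := ⟨0, by ext x; simp [hΦ]⟩
    mul_mem' := by
      rintro _ _ ⟨v, rfl⟩ ⟨w, rfl⟩
      exact ⟨v + w, by ext x; simp [hΦ, inner_add_right, Real.exp_add]⟩ }
  let A : Subalgebra ℝ C(K, ℝ) := Algebra.adjoin ℝ (Set.range Φ)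
  have hsep : A.SeparatesPoints := by
    intro x y hxy
    refine ⟨Φ ((x : EuclideanSpace ℝ (Fin n)) - (y : EuclideanSpace ℝ (Fin n))),
      ⟨Φ _, Algebra.subset_adjoin ⟨_, rfl⟩, rfl⟩, ?_⟩
    simp only [hΦ]
    intro h
    have h2 := Real.exp_injective h
    rw [← sub_eq_zero, ← inner_sub_left] at h2
    have hxy' : (x : EuclideanSpace ℝ (Fin n)) - (y : EuclideanSpace ℝ (Fin n)) ≠ 0 :=
      sub_ne_zero.mpr (fun h => hxy (Subtype.ext h))
    exact hxy' ((inner_self_eq_zero (𝕜 := ℝ)).mp h2)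
  -- the function to approximate, after dividing by the Gaussian e^{-‖x‖²}
  let g : C(K, ℝ) :=
    ⟨fun x => f x * Real.exp (‖(x : EuclideanSpace ℝ (Fin n))‖ ^ 2),
      f.continuous.mul (Real.continuous_exp.comp ((continuous_subtype_val.norm).pow 2))⟩
  obtain ⟨⟨p, hpA⟩, hp⟩ :=
    ContinuousMap.exists_mem_subalgebra_near_continuousMap_of_separatesPoints A hsep g ε hε
  -- express p as a finite linear combination of exponentials
  have hspan : p ∈ Submodule.span ℝ (Set.range Φ) := by
    have h1 : (Subalgebra.toSubmodule A : Submodule ℝ C(K, ℝ)) =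
        Submodule.span ℝ (Submonoid.closure (Set.range Φ) : Set C(K, ℝ)) :=
      Algebra.adjoin_eq_span ℝ _
    have hcl : Submonoid.closure (Set.range Φ) = M := Submonoid.closure_eq M
    rw [hcl] at h1
    have : p ∈ Submodule.span ℝ (M : Set C(K, ℝ)) := by rw [← h1]; exact hpA
    exact this
  rw [Submodule.mem_span_set] at hspan
  obtain ⟨d, hd, hsum⟩ := hspan
  set s := d.support with hs
  let e := s.equivFin
  let w : s → EuclideanSpace ℝ (Fin n) := fun q => Classical.choose (hd q.2)
  have hw : ∀ q : s, Φ (w q) = (q : C(K, ℝ)) := fun q => Classical.choose_spec (hd q.2)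
  refine ⟨s.card,
    fun j => d (e.symm j) * Real.exp (‖(2⁻¹ : ℝ) • w (e.symm j)‖ ^ 2),
    fun j => (2⁻¹ : ℝ) • w (e.symm j), fun x => ?_⟩
  -- key pointwise identity
  have key : ∀ q : s, d q * Real.exp (‖(2⁻¹:ℝ) • w q‖ ^ 2) *
      Real.exp (-‖(x : EuclideanSpace ℝ (Fin n)) - (2⁻¹:ℝ) • w q‖ ^ 2)
      = d q * (q : C(K, ℝ)) x * Real.exp (-‖(x : EuclideanSpace ℝ (Fin n))‖ ^ 2) := by
    intro q
    rw [← hw q, hΦ]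
    set a := (2⁻¹:ℝ) • w q with ha
    have hxa : ‖(x : EuclideanSpace ℝ (Fin n)) - a‖ ^ 2
        = ‖(x : EuclideanSpace ℝ (Fin n))‖ ^ 2
          - 2 * ⟪(x : EuclideanSpace ℝ (Fin n)), a⟫ + ‖a‖ ^ 2 :=
      norm_sub_sq_real _ _
    have hinner : ⟪(x : EuclideanSpace ℝ (Fin n)), w q⟫
        = 2 * ⟪(x : EuclideanSpace ℝ (Fin n)), a⟫ := by
      rw [ha, inner_smul_right]; ring
    rw [hinner, hxa, mul_assoc, mul_assoc, ← Real.exp_add, ← Real.exp_add]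
    congr 2
    ring
  have hsum' : ∑ j : Fin s.card, (d (e.symm j) * Real.exp (‖(2⁻¹:ℝ) • w (e.symm j)‖ ^ 2)) *
      Real.exp (-‖(x : EuclideanSpace ℝ (Fin n)) - (2⁻¹:ℝ) • w (e.symm j)‖ ^ 2)
      = p x * Real.exp (-‖(x : EuclideanSpace ℝ (Fin n))‖ ^ 2) := by
    rw [Fintype.sum_equiv e.symm _ (fun q : s => d q * (q : C(K, ℝ)) x *
        Real.exp (-‖(x : EuclideanSpace ℝ (Fin n))‖ ^ 2)) (fun j => key _)]
    rw [← Finset.sum_mul]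
    congr 1
    have : p x = (d.sum fun mi r => r • mi) x := by rw [hsum]
    rw [this, Finsupp.sum, ContinuousMap.coe_sum, Finset.sum_apply]
    rw [← Finset.sum_coe_sort (s := s)]
    exact Finset.sum_congr rfl (fun q _ => by simp)
  rw [hsum']
  -- final estimate
  have hbound : ∀ y : K, |p y - g y| ≤ ‖(ContinuousMap.mk p.toFun p.continuous : C(K,ℝ)) - g‖ := by
    intro y
    exact ((p - g).norm_coe_le_norm y).trans_eq (by rfl)
  have hxb := (p - g).norm_coe_le_norm x
  have hexp : Real.exp (-‖(x : EuclideanSpace ℝ (Fin n))‖ ^ 2) ≤ 1 := by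
    rw [Real.exp_le_one_iff]
    simp [sq_nonneg]
  have hexp0 : 0 < Real.exp (-‖(x : EuclideanSpace ℝ (Fin n))‖ ^ 2) := Real.exp_pos _
  have hgx : g x = f x * Real.exp (‖(x : EuclideanSpace ℝ (Fin n))‖ ^ 2) := rfl
  have : f x - p x * Real.exp (-‖(x : EuclideanSpace ℝ (Fin n))‖ ^ 2)
      = (g x - p x) * Real.exp (-‖(x : EuclideanSpace ℝ (Fin n))‖ ^ 2) := by
    rw [hgx, sub_mul, mul_assoc, ← Real.exp_add]
    simp
  rw [this, abs_mul, abs_of_pos hexp0]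
  calc |g x - p x| * Real.exp (-‖(x : EuclideanSpace ℝ (Fin n))‖ ^ 2)
      ≤ |g x - p x| * 1 := by
        exact mul_le_mul_of_nonneg_left hexp (abs_nonneg _)
    _ = |(p - g) x| := by rw [mul_one, ContinuousMap.sub_apply, abs_sub_comm]
    _ ≤ ‖p - g‖ := (p - g).norm_coe_le_norm x
    _ < ε := hp
end

section
/- Let ψ : X × X → ℝ be symmetric with ψ(x,x) = 0 for all x, and conditionally negative definite (i.e., ∑_{i,j} conj(c_i) c_j ψ(x_i,x_j) ≤ 0 whenever ∑_j c_j = 0). Fix a base point x_0 ∈ X. Then k(x,y) = −ψ(x,y) + ψ(x,x_0) + ψ(x_0,y) − ψ(x_0,x_0) is a kernel (positive semi-definite), and ‖k_x − k_y‖²_{H_k} = 2ψ(x,y). -/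
open scoped ComplexOrder ComplexConjugate

/-- Let `ψ : X × X → ℝ` be symmetric, vanish on the diagonal, and be conditionally
negative definite.  Then for any base point `x₀`, the function
`k(x,y) = −ψ(x,y) + ψ(x,x₀) + ψ(x₀,y) − ψ(x₀,x₀)` is a (positive semi-definite, real
hence self-adjoint) kernel, and `‖k_x − k_y‖²_{H_k} = k(x,x) − 2k(x,y) + k(y,y) = 2ψ(x,y)`. -/
theorem cnd_to_kernel {X : Type*} (ψ : X → X → ℝ)
    (hsymm : ∀ x y, ψ x y = ψ y x) (hdiag : ∀ x, ψ x x = 0)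
    (hcnd : ∀ (n : ℕ) (x : Fin n → X) (c : Fin n → ℂ), (∑ j, c j = 0) →
      ∑ i, ∑ j, conj (c i) * c j * (ψ (x i) (x j) : ℂ) ≤ 0)
    (x₀ : X) :
    (∀ (n : ℕ) (x : Fin n → X) (c : Fin n → ℂ),
      0 ≤ ∑ i, ∑ j, c i * conj (c j) *
        ((-ψ (x i) (x j) + ψ (x i) x₀ + ψ x₀ (x j) - ψ x₀ x₀ : ℝ) : ℂ)) ∧
    (∀ x y : X,
      (fun u v => -ψ u v + ψ u x₀ + ψ x₀ v - ψ x₀ x₀) x x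
        - 2 * (fun u v => -ψ u v + ψ u x₀ + ψ x₀ v - ψ x₀ x₀) x y
        + (fun u v => -ψ u v + ψ u x₀ + ψ x₀ v - ψ x₀ x₀) y y
      = 2 * ψ x y) := by

  refine ⟨?_, ?_⟩
  · intro n x c
    have hsum : ∑ j, (Fin.cons (-∑ j, conj (c j)) (fun j => conj (c j)) : Fin (n+1) → ℂ) j = 0 := by
      rw [Fin.sum_cons]; ring
    have h := hcnd (n+1) (Fin.cons x₀ x) _ hsum
    have key : (∑ i, ∑ j, c i * conj (c j) *
          ((-ψ (x i) (x j) + ψ (x i) x₀ + ψ x₀ (x j) - ψ x₀ x₀ : ℝ) : ℂ))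
        = -(∑ i, ∑ j,
            conj ((Fin.cons (-∑ j, conj (c j)) (fun j => conj (c j)) : Fin (n+1) → ℂ) i)
            * (Fin.cons (-∑ j, conj (c j)) (fun j => conj (c j)) : Fin (n+1) → ℂ) j
            * (ψ ((Fin.cons x₀ x : Fin (n+1) → X) i) ((Fin.cons x₀ x : Fin (n+1) → X) j) : ℂ)) := by
      simp only [Fin.sum_univ_succ, Fin.cons_zero, Fin.cons_succ, hdiag]
      push_cast
      simp only [map_neg, map_sum, Complex.conj_conj, mul_add, mul_sub, add_mul, sub_mul, neg_mul,
        mul_neg, Finset.sum_add_distrib, Finset.sum_sub_distrib, Finset.mul_sum, Finset.sum_mul,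
        Finset.sum_neg_distrib]
      ring_nf
      simp only [mul_zero, Finset.sum_const_zero, sub_zero]
      have hc : (∑ a : Fin n, ∑ b : Fin n, c b * conj (c a) * ((ψ x₀ (x a) : ℝ) : ℂ))
          = ∑ a : Fin n, ∑ b : Fin n, c a * conj (c b) * ((ψ x₀ (x b) : ℝ) : ℂ) := Finset.sum_comm
      rw [hc]
    rw [key]
    exact neg_nonneg.mpr h
  · intro x y
    simp only
    rw [hdiag x, hdiag y, hsymm x₀ x, hsymm y x₀]
    ring
end
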